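/- arXiv:2211.04671 — 4 statements merged into one kernel-verified Lean document; each statement's English description precedes it below -/
import Mathlib

section
/- Under assumption (B.1), for every ε > 0 the map t ↦ Ê[ξ_t + εη_t] is continuous on [0,T], for every t ∈ [0,T] one has Ê_{ξ_t}[η_t] = lim_{ε↓0} (Ê[ξ_t + εη_t] − Ê[ξ_t])/ε, and consequently the function t ↦ Ê_{ξ_t}[η_t] is Borel measurable on [0,T]. -/
open MeasureTheory Filter Topology Set

noncomputable section

variable {Ω : Type*} [MeasurableSpace Ω] [TopologicalSpace Ω]

/-- `ξ : Ω → ℝ` belongs to `L¹(𝒮)`: it is Borel measurable, integrable w.r.t. every `P ∈ 𝒮`,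
and can be approximated uniformly over `𝒮` in `L¹`-norm by bounded continuous functions. -/
def MemL1 (𝒮 : Set (ProbabilityMeasure Ω)) (ξ : Ω → ℝ) : Prop :=
  Measurable ξ ∧ (∀ P ∈ 𝒮, Integrable ξ (P : Measure Ω)) ∧
    ∀ δ : ℝ, 0 < δ → ∃ θ : BoundedContinuousFunction Ω ℝ,
      ∀ P ∈ 𝒮, ∫ ω, |ξ ω - θ ω| ∂(P : Measure Ω) ≤ δ

/-- The sublinear expectation `Ê[ξ] = sup_{P ∈ 𝒮} E_P[ξ]`. -/
def sublinE (𝒮 : Set (ProbabilityMeasure Ω)) (ξ : Ω → ℝ) : ℝ :=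
  ⨆ P : 𝒮, ∫ ω, ξ ω ∂((P : ProbabilityMeasure Ω) : Measure Ω)

/-- The set of maximizers `𝒫_{ξ} = {P ∈ 𝒮 : E_P[ξ] = Ê[ξ]}`. -/
def maximizers (𝒮 : Set (ProbabilityMeasure Ω)) (ξ : Ω → ℝ) : Set (ProbabilityMeasure Ω) :=
  {P ∈ 𝒮 | ∫ ω, ξ ω ∂(P : Measure Ω) = sublinE 𝒮 ξ}

/-- `Ê_{ξ}[η] = sup_{P ∈ 𝒫_{ξ}} E_P[η]`. -/
def sublinECond (𝒮 : Set (ProbabilityMeasure Ω)) (ξ η : Ω → ℝ) : ℝ :=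
  ⨆ P : maximizers 𝒮 ξ, ∫ ω, η ω ∂((P : ProbabilityMeasure Ω) : Measure Ω)

/-! ### Auxiliary abstract lemmas -/

section Abstract

variable {X : Type*} [TopologicalSpace X]

lemma bddAbove_range_restrict {K : Set X} (hK : IsCompact K) {f : X → ℝ}
    (hf : ContinuousOn f K) : BddAbove (range fun p : K => f p) := by
  have h : (range fun p : K => f p) = f '' K := Set.range_restrict f K
  rw [h]
  exact (hK.image_of_continuousOn hf).bddAbove

lemma le_csup {K : Set X} (hK : IsCompact K) {f : X → ℝ} (hf : ContinuousOn f K)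
    {P : X} (hP : P ∈ K) : f P ≤ ⨆ p : K, f p :=
  le_ciSup (bddAbove_range_restrict hK hf) (⟨P, hP⟩ : K)

lemma exists_csup_eq {K : Set X} (hK : IsCompact K) (hne : K.Nonempty) {f : X → ℝ}
    (hf : ContinuousOn f K) : ∃ P ∈ K, f P = ⨆ p : K, f p := by
  haveI := hne.to_subtype
  obtain ⟨P, hPK, hmax⟩ := hK.exists_isMaxOn hne hf
  exact ⟨P, hPK, le_antisymm (le_csup hK hf hPK) (ciSup_le fun p => hmax p.2)⟩

lemma csup_sub_csup_le {K : Set X} (hne : K.Nonempty) {f g : X → ℝ}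
    (hbf : BddAbove (range fun p : K => f p)) (hbg : BddAbove (range fun p : K => g p))
    {b : ℝ} (hb : ∀ P ∈ K, |f P - g P| ≤ b) :
    |(⨆ p : K, f p) - ⨆ p : K, g p| ≤ b := by
  haveI := hne.to_subtype
  rw [abs_sub_le_iff]
  constructor
  · rw [sub_le_iff_le_add]
    refine ciSup_le fun p => ?_
    have h1 := (abs_sub_le_iff.mp (hb p p.2)).1
    have h2 := le_ciSup hbg p
    linarith
  · rw [sub_le_iff_le_add]
    refine ciSup_le fun p => ?_
    have h1 := (abs_sub_le_iff.mp (hb p p.2)).2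
    have h2 := le_ciSup hbf p
    linarith

/-- Danskin-type theorem on a compact set. -/
lemma danskin {K : Set X} (hK : IsCompact K) (hne : K.Nonempty)
    {f g : X → ℝ} (hf : ContinuousOn f K) (hg : ContinuousOn g K) :
    Tendsto (fun ε : ℝ => ((⨆ p : K, (f p + ε * g p)) - ⨆ p : K, f p) / ε) (𝓝[>] (0:ℝ))
      (𝓝 (⨆ p : {q ∈ K | f q = ⨆ p : K, f p}, g p)) := by
  haveI := hne.to_subtype
  set S : ℝ := ⨆ p : K, f p with hS
  set M : Set X := {q ∈ K | f q = S} with hM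
  set Sg : ℝ := ⨆ p : M, g p with hSg
  set h : ℝ → ℝ := fun ε => ((⨆ p : K, (f p + ε * g p)) - S) / ε with hh
  have hcont : ∀ ε : ℝ, ContinuousOn (fun p => f p + ε * g p) K :=
    fun ε => hf.add (continuousOn_const.mul hg)
  obtain ⟨P₀, hP₀K, hP₀⟩ := exists_csup_eq hK hne hf
  have hP₀M : P₀ ∈ M := ⟨hP₀K, hP₀⟩
  haveI : Nonempty M := ⟨⟨P₀, hP₀M⟩⟩
  have hMK : M ⊆ K := fun q hq => hq.1
  have hbddg : BddAbove (range fun p : M => g p) := by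
    obtain ⟨b, hb⟩ := bddAbove_range_restrict hK hg
    exact ⟨b, by rintro x ⟨p, rfl⟩; exact hb ⟨⟨p.1, hMK p.2⟩, rfl⟩⟩
  have hfS : ∀ P ∈ K, f P ≤ S := fun P hP => le_csup hK hf hP
  have hlow : ∀ ε : ℝ, 0 < ε → Sg ≤ h ε := by
    intro ε hε
    refine ciSup_le fun p => ?_
    have h1 : f p.1 + ε * g p.1 ≤ ⨆ q : K, (f q + ε * g q) :=
      le_csup hK (hcont ε) (hMK p.2)
    have h2 : f p.1 = S := p.2.2
    rw [le_div_iff₀ hε]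
    nlinarith [h1, h2]
  have hub : ∀ ε : ℝ, 0 < ε → ∃ P ∈ K, (⨆ q : K, (f q + ε * g q)) = f P + ε * g P := by
    intro ε hε
    obtain ⟨P, hPK, hPeq⟩ := exists_csup_eq hK hne (hcont ε)
    exact ⟨P, hPK, hPeq.symm⟩
  have hle_g : ∀ ε : ℝ, 0 < ε → ∀ P ∈ K, (⨆ q : K, (f q + ε * g q)) = f P + ε * g P →
      h ε ≤ g P := by
    intro ε hε P hPK hPeq
    rw [hh]
    simp only
    rw [div_le_iff₀ hε, hPeq]
    nlinarith [hfS P hPK]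
  have hmono : MonotoneOn h (Ioi (0:ℝ)) := by
    intro a ha b hb hab
    have ha' : (0:ℝ) < a := ha
    have hb' : (0:ℝ) < b := hb
    obtain ⟨P, hPK, hPeq⟩ := hub a ha'
    have h1 : f P + b * g P ≤ ⨆ q : K, (f q + b * g q) := le_csup hK (hcont b) hPK
    have h2 : f P ≤ S := hfS P hPK
    rw [hh]
    simp only
    rw [div_le_div_iff₀ ha' hb', hPeq]
    nlinarith
  have hSgM : ∀ P ∈ M, g P ≤ Sg := fun P hP => le_ciSup hbddg (⟨P, hP⟩ : M)
  have key : ∀ δ : ℝ, 0 < δ → ∃ ε : ℝ, 0 < ε ∧ h ε ≤ Sg + δ := by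
    intro δ hδ
    by_cases hA : ∃ P ∈ K, Sg + δ ≤ g P
    · haveI : CompactSpace ↥K := isCompact_iff_compactSpace.mp hK
      have hAcomp : IsCompact {p ∈ K | Sg + δ ≤ g p} := by
        have h1 : IsClosed {p : ↥K | Sg + δ ≤ g ↑p} :=
          isClosed_le continuous_const hg.restrict
        have h2 : {p ∈ K | Sg + δ ≤ g p} = Subtype.val '' {p : ↥K | Sg + δ ≤ g ↑p} := by
          ext x
          constructor
          · rintro ⟨hxK, hxg⟩; exact ⟨⟨x, hxK⟩, hxg, rfl⟩
          · rintro ⟨⟨y, hyK⟩, hyg, rfl⟩; exact ⟨hyK, hyg⟩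
        rw [h2]
        exact h1.isCompact.image continuous_subtype_val
      have hAne : {p ∈ K | Sg + δ ≤ g p}.Nonempty := by
        obtain ⟨P, hPK, hPg⟩ := hA
        exact ⟨P, hPK, hPg⟩
      obtain ⟨Q, hQA, hQmax⟩ :=
        hAcomp.exists_isMaxOn hAne (hf.mono (fun p hp => hp.1))
      have hQS : f Q < S := by
        rcases lt_or_eq_of_le (hfS Q hQA.1) with hlt | heq
        · exact hlt
        · exact absurd (hSgM Q ⟨hQA.1, heq⟩) (by linarith [hQA.2])
      obtain ⟨Mg, hMg⟩ := bddAbove_range_restrict hK hg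
      have hMg' : ∀ P ∈ K, g P ≤ Mg := fun P hP => hMg ⟨⟨P, hP⟩, rfl⟩
      set ε := (S - f Q) / (|Mg - Sg - δ| + 1) with hεdef
      have hD : (0:ℝ) < |Mg - Sg - δ| + 1 := by positivity
      have hεpos : 0 < ε := div_pos (by linarith) hD
      have hεD : ε * (|Mg - Sg - δ| + 1) = S - f Q := by
        rw [hεdef]; field_simp
      refine ⟨ε, hεpos, ?_⟩
      obtain ⟨P, hPK, hPeq⟩ := hub ε hεpos
      by_cases hgP : Sg + δ ≤ g P
      · have hfPQ : f P ≤ f Q := hQmax ⟨hPK, hgP⟩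
        rw [hh]
        simp only
        rw [hPeq, div_le_iff₀ hεpos]
        nlinarith [le_abs_self (Mg - Sg - δ), hMg' P hPK, hεpos.le,
          mul_le_mul_of_nonneg_left (hMg' P hPK) hεpos.le]
      · exact le_trans (hle_g ε hεpos P hPK hPeq) (le_of_lt (not_le.mp hgP))
    · push_neg at hA
      obtain ⟨P, hPK, hPeq⟩ := hub 1 one_pos
      exact ⟨1, one_pos, le_trans (hle_g 1 one_pos P hPK hPeq) (le_of_lt (hA P hPK))⟩
  have hbddB : BddBelow (h '' Ioi 0) := by
    refine ⟨Sg, ?_⟩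
    rintro x ⟨ε, hε, rfl⟩
    exact hlow ε hε
  have hlim := hmono.tendsto_nhdsGT hbddB
  have heq : sInf (h '' Ioi 0) = Sg := by
    apply le_antisymm
    · apply le_of_forall_pos_le_add
      intro δ hδ
      obtain ⟨ε, hε, hhε⟩ := key δ hδ
      exact csInf_le_of_le hbddB ⟨ε, hε, rfl⟩ hhε
    · refine le_csInf ⟨h 1, ⟨1, mem_Ioi.mpr one_pos, rfl⟩⟩ ?_
      rintro x ⟨ε, hε, rfl⟩
      exact hlow ε hε
  rw [heq] at hlim
  exact hlim

lemma continuousOn_of_sqrt_bound {A : Set ℝ} {φ : ℝ → ℝ} {K₀ : ℝ} (hK₀ : 0 ≤ K₀)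
    (hb : ∀ s ∈ A, ∀ t ∈ A, |φ t - φ s| ≤ K₀ * Real.sqrt |t - s|) : ContinuousOn φ A := by
  intro s hs
  rw [ContinuousWithinAt, Metric.tendsto_nhdsWithin_nhds]
  intro ε hε
  refine ⟨(ε / (K₀ + 1)) ^ 2, by positivity, fun {t} ht hd => ?_⟩
  rw [Real.dist_eq] at hd ⊢
  have h1 := hb s hs t ht
  have h2 : Real.sqrt |t - s| < ε / (K₀ + 1) := by
    have h3 := Real.sqrt_lt_sqrt (abs_nonneg _) hd
    rwa [Real.sqrt_sq (by positivity)] at h3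
  have h4 : Real.sqrt |t - s| * (K₀ + 1) < ε := by
    rw [← lt_div_iff₀ (by positivity : (0:ℝ) < K₀ + 1)]
    exact h2
  have h5 := Real.sqrt_nonneg |t - s|
  nlinarith

end Abstract

/-! ### Measure-theoretic auxiliary lemmas -/

section Meas

variable [OpensMeasurableSpace Ω]

lemma memL1_continuousOn {𝒮 : Set (ProbabilityMeasure Ω)} {ξ : Ω → ℝ} (hξ : MemL1 𝒮 ξ) :
    ContinuousOn (fun P : ProbabilityMeasure Ω => ∫ ω, ξ ω ∂(P : Measure Ω)) 𝒮 := by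
  intro P₀ hP₀
  rw [ContinuousWithinAt, Metric.tendsto_nhds]
  intro ε hε
  obtain ⟨θ, hθ⟩ := hξ.2.2 (ε / 3) (by linarith)
  have hbound : ∀ Q ∈ 𝒮, |(∫ ω, ξ ω ∂(Q : Measure Ω)) - ∫ ω, θ ω ∂(Q : Measure Ω)| ≤ ε / 3 := by
    intro Q hQ
    have hint : Integrable ξ (Q : Measure Ω) := hξ.2.1 Q hQ
    have hintθ : Integrable θ (Q : Measure Ω) := θ.integrable _
    rw [← integral_sub hint hintθ]
    calc |∫ ω, (ξ ω - θ ω) ∂(Q : Measure Ω)| ≤ ∫ ω, |ξ ω - θ ω| ∂(Q : Measure Ω) := by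
          simpa [Real.norm_eq_abs] using
            norm_integral_le_integral_norm (μ := (Q : Measure Ω)) (fun ω => ξ ω - θ ω)
      _ ≤ ε / 3 := hθ Q hQ
  have hθc : Tendsto (fun P : ProbabilityMeasure Ω => ∫ ω, θ ω ∂(P : Measure Ω)) (𝓝[𝒮] P₀)
      (𝓝 (∫ ω, θ ω ∂(P₀ : Measure Ω))) :=
    ((ProbabilityMeasure.continuous_integral_boundedContinuousFunction θ).tendsto P₀).mono_left
      nhdsWithin_le_nhds
  have h1 : ∀ᶠ (P : ProbabilityMeasure Ω) in 𝓝[𝒮] P₀,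
      dist (∫ ω, θ ω ∂(P : Measure Ω)) (∫ ω, θ ω ∂(P₀ : Measure Ω)) < ε / 3 :=
    Metric.tendsto_nhds.mp hθc (ε / 3) (by linarith)
  filter_upwards [h1, self_mem_nhdsWithin] with P hd hP
  rw [Real.dist_eq] at hd ⊢
  have b1 := hbound P hP
  have b2 := hbound P₀ hP₀
  have htri : |(∫ ω, ξ ω ∂(P : Measure Ω)) - ∫ ω, ξ ω ∂(P₀ : Measure Ω)| ≤
      |(∫ ω, ξ ω ∂(P : Measure Ω)) - ∫ ω, θ ω ∂(P : Measure Ω)| +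
      |(∫ ω, θ ω ∂(P : Measure Ω)) - ∫ ω, θ ω ∂(P₀ : Measure Ω)| +
      |(∫ ω, θ ω ∂(P₀ : Measure Ω)) - ∫ ω, ξ ω ∂(P₀ : Measure Ω)| := by
    have t1 := abs_sub_le (∫ ω, ξ ω ∂(P : Measure Ω)) (∫ ω, θ ω ∂(P : Measure Ω))
      (∫ ω, ξ ω ∂(P₀ : Measure Ω))
    have t2 := abs_sub_le (∫ ω, θ ω ∂(P : Measure Ω)) (∫ ω, θ ω ∂(P₀ : Measure Ω))
      (∫ ω, ξ ω ∂(P₀ : Measure Ω))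
    linarith
  rw [abs_sub_comm (∫ ω, θ ω ∂(P₀ : Measure Ω))] at htri
  linarith

omit [TopologicalSpace Ω] [OpensMeasurableSpace Ω] in
lemma integral_abs_le_sqrt_integral_sq {μ : Measure Ω} [IsProbabilityMeasure μ] {f : Ω → ℝ}
    (hf : AEStronglyMeasurable f μ) (hf2 : Integrable (fun ω => f ω ^ 2) μ) :
    ∫ ω, |f ω| ∂μ ≤ Real.sqrt (∫ ω, f ω ^ 2 ∂μ) := by
  have hm2 : MemLp f 2 μ := (memLp_two_iff_integrable_sq hf).mpr hf2
  have hma : MemLp (fun ω => |f ω|) 2 μ := hm2.abs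
  have hvar := ProbabilityTheory.variance_nonneg (fun ω => |f ω|) μ
  rw [ProbabilityTheory.variance_eq_sub hma] at hvar
  simp only [Pi.pow_apply, sq_abs] at hvar
  have h0 : 0 ≤ ∫ ω, |f ω| ∂μ := integral_nonneg fun ω => abs_nonneg _
  have h2 : 0 ≤ ∫ ω, f ω ^ 2 ∂μ := integral_nonneg fun ω => sq_nonneg _
  rw [Real.le_sqrt h0 h2]
  linarith

end Meas

/-- under (B.1), `t ↦ Ê[ξ_t + εη_t]` is continuous on `[0,T]` for every `ε > 0`,
`Ê_{ξ_t}[η_t]` is the right derivative at `0` of `ε ↦ Ê[ξ_t + εη_t]`, and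
`t ↦ Ê_{ξ_t}[η_t]` is Borel measurable on `[0,T]`. -/
theorem stmt_12 {Ω : Type*} [MeasurableSpace Ω] [TopologicalSpace Ω] [PolishSpace Ω] [BorelSpace Ω]
    (𝒮 : Set (ProbabilityMeasure Ω)) (h𝒮ne : 𝒮.Nonempty) (h𝒮c : IsCompact 𝒮)
    (T : ℝ) (hT : 0 < T) (ξ η : ℝ → Ω → ℝ)
    (hξ : ∀ t ∈ Icc (0:ℝ) T, MemL1 𝒮 (ξ t)) (hη : ∀ t ∈ Icc (0:ℝ) T, MemL1 𝒮 (η t))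
    (hξ2 : ∀ t ∈ Icc (0:ℝ) T, ∀ P ∈ 𝒮, Integrable (fun ω => (ξ t ω) ^ 2) (P : Measure Ω))
    (hη2 : ∀ t ∈ Icc (0:ℝ) T, ∀ P ∈ 𝒮, Integrable (fun ω => (η t ω) ^ 2) (P : Measure Ω))
    (C : ℝ) (hC : 0 ≤ C)
    (hB1 : ∀ s ∈ Icc (0:ℝ) T, ∀ t ∈ Icc (0:ℝ) T, ∀ P ∈ 𝒮,
      ∫ ω, (|ξ t ω - ξ s ω| ^ 2 + |η t ω - η s ω| ^ 2) ∂(P : Measure Ω) ≤ C * |t - s|) :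
    (∀ ε : ℝ, 0 < ε →
      ContinuousOn (fun t => sublinE 𝒮 (fun ω => ξ t ω + ε * η t ω)) (Icc (0:ℝ) T)) ∧
    (∀ t ∈ Icc (0:ℝ) T,
      Tendsto (fun ε : ℝ => (sublinE 𝒮 (fun ω => ξ t ω + ε * η t ω) - sublinE 𝒮 (ξ t)) / ε)
        (𝓝[>] 0) (𝓝 (sublinECond 𝒮 (ξ t) (η t)))) ∧
    Measurable (fun t : Icc (0:ℝ) T => sublinECond 𝒮 (ξ t) (η t)) := by
  haveI := h𝒮ne.to_subtype
  -- continuity of the integral functionals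
  have hcξ : ∀ t ∈ Icc (0:ℝ) T,
      ContinuousOn (fun P : ProbabilityMeasure Ω => ∫ ω, ξ t ω ∂(P : Measure Ω)) 𝒮 :=
    fun t ht => memL1_continuousOn (hξ t ht)
  have hcη : ∀ t ∈ Icc (0:ℝ) T,
      ContinuousOn (fun P : ProbabilityMeasure Ω => ∫ ω, η t ω ∂(P : Measure Ω)) 𝒮 :=
    fun t ht => memL1_continuousOn (hη t ht)
  -- key identity
  have key : ∀ t ∈ Icc (0:ℝ) T, ∀ ε : ℝ, sublinE 𝒮 (fun ω => ξ t ω + ε * η t ω) =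
      ⨆ P : 𝒮, ((∫ ω, ξ t ω ∂((P : ProbabilityMeasure Ω) : Measure Ω)) +
        ε * ∫ ω, η t ω ∂((P : ProbabilityMeasure Ω) : Measure Ω)) := by
    intro t ht ε
    simp only [sublinE]
    refine iSup_congr fun P => ?_
    rw [integral_add ((hξ t ht).2.1 P P.2) (((hη t ht).2.1 P P.2).const_mul ε),
      integral_const_mul]
  -- per-measure increment bound
  have hdiff : ∀ ε : ℝ, 0 ≤ ε → ∀ s ∈ Icc (0:ℝ) T, ∀ t ∈ Icc (0:ℝ) T, ∀ P ∈ 𝒮,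
      |((∫ ω, ξ t ω ∂(P : Measure Ω)) + ε * ∫ ω, η t ω ∂(P : Measure Ω)) -
       ((∫ ω, ξ s ω ∂(P : Measure Ω)) + ε * ∫ ω, η s ω ∂(P : Measure Ω))| ≤
      (1 + ε) * Real.sqrt (C * |t - s|) := by
    intro ε hε s hs t ht P hP
    have mξt : MemLp (ξ t) 2 (P : Measure Ω) :=
      (memLp_two_iff_integrable_sq (hξ t ht).1.aestronglyMeasurable).mpr (hξ2 t ht P hP)
    have mξs : MemLp (ξ s) 2 (P : Measure Ω) :=
      (memLp_two_iff_integrable_sq (hξ s hs).1.aestronglyMeasurable).mpr (hξ2 s hs P hP)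
    have mηt : MemLp (η t) 2 (P : Measure Ω) :=
      (memLp_two_iff_integrable_sq (hη t ht).1.aestronglyMeasurable).mpr (hη2 t ht P hP)
    have mηs : MemLp (η s) 2 (P : Measure Ω) :=
      (memLp_two_iff_integrable_sq (hη s hs).1.aestronglyMeasurable).mpr (hη2 s hs P hP)
    have mΔξ : MemLp (fun ω => ξ t ω - ξ s ω) 2 (P : Measure Ω) := mξt.sub mξs
    have mΔη : MemLp (fun ω => η t ω - η s ω) 2 (P : Measure Ω) := mηt.sub mηs
    have iΔξ2 : Integrable (fun ω => (ξ t ω - ξ s ω) ^ 2) (P : Measure Ω) :=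
      (memLp_two_iff_integrable_sq mΔξ.aestronglyMeasurable).mp mΔξ
    have iΔη2 : Integrable (fun ω => (η t ω - η s ω) ^ 2) (P : Measure Ω) :=
      (memLp_two_iff_integrable_sq mΔη.aestronglyMeasurable).mp mΔη
    have isum : Integrable (fun ω => |ξ t ω - ξ s ω| ^ 2 + |η t ω - η s ω| ^ 2)
        (P : Measure Ω) := by
      have heq : (fun ω => |ξ t ω - ξ s ω| ^ 2 + |η t ω - η s ω| ^ 2) =
          fun ω => (ξ t ω - ξ s ω) ^ 2 + (η t ω - η s ω) ^ 2 := by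
        funext ω; rw [sq_abs, sq_abs]
      rw [heq]
      exact iΔξ2.add iΔη2
    have hsqξ : ∫ ω, (ξ t ω - ξ s ω) ^ 2 ∂(P : Measure Ω) ≤ C * |t - s| := by
      refine le_trans (integral_mono iΔξ2 isum fun ω => ?_) (hB1 s hs t ht P hP)
      simp only [sq_abs]
      nlinarith [sq_nonneg (η t ω - η s ω)]
    have hsqη : ∫ ω, (η t ω - η s ω) ^ 2 ∂(P : Measure Ω) ≤ C * |t - s| := by
      refine le_trans (integral_mono iΔη2 isum fun ω => ?_) (hB1 s hs t ht P hP)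
      simp only [sq_abs]
      nlinarith [sq_nonneg (ξ t ω - ξ s ω)]
    have h1 : |(∫ ω, ξ t ω ∂(P : Measure Ω)) - ∫ ω, ξ s ω ∂(P : Measure Ω)| ≤
        Real.sqrt (C * |t - s|) := by
      rw [← integral_sub ((hξ t ht).2.1 P hP) ((hξ s hs).2.1 P hP)]
      calc |∫ ω, (ξ t ω - ξ s ω) ∂(P : Measure Ω)|
          ≤ ∫ ω, |ξ t ω - ξ s ω| ∂(P : Measure Ω) := by
            simpa [Real.norm_eq_abs] using
              norm_integral_le_integral_norm (μ := (P : Measure Ω)) (fun ω => ξ t ω - ξ s ω)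
        _ ≤ Real.sqrt (∫ ω, (ξ t ω - ξ s ω) ^ 2 ∂(P : Measure Ω)) :=
            integral_abs_le_sqrt_integral_sq mΔξ.aestronglyMeasurable iΔξ2
        _ ≤ Real.sqrt (C * |t - s|) := Real.sqrt_le_sqrt hsqξ
    have h2 : |(∫ ω, η t ω ∂(P : Measure Ω)) - ∫ ω, η s ω ∂(P : Measure Ω)| ≤
        Real.sqrt (C * |t - s|) := by
      rw [← integral_sub ((hη t ht).2.1 P hP) ((hη s hs).2.1 P hP)]
      calc |∫ ω, (η t ω - η s ω) ∂(P : Measure Ω)|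
          ≤ ∫ ω, |η t ω - η s ω| ∂(P : Measure Ω) := by
            simpa [Real.norm_eq_abs] using
              norm_integral_le_integral_norm (μ := (P : Measure Ω)) (fun ω => η t ω - η s ω)
        _ ≤ Real.sqrt (∫ ω, (η t ω - η s ω) ^ 2 ∂(P : Measure Ω)) :=
            integral_abs_le_sqrt_integral_sq mΔη.aestronglyMeasurable iΔη2
        _ ≤ Real.sqrt (C * |t - s|) := Real.sqrt_le_sqrt hsqη
    calc |((∫ ω, ξ t ω ∂(P : Measure Ω)) + ε * ∫ ω, η t ω ∂(P : Measure Ω)) -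
          ((∫ ω, ξ s ω ∂(P : Measure Ω)) + ε * ∫ ω, η s ω ∂(P : Measure Ω))|
        = |((∫ ω, ξ t ω ∂(P : Measure Ω)) - ∫ ω, ξ s ω ∂(P : Measure Ω)) +
            ε * ((∫ ω, η t ω ∂(P : Measure Ω)) - ∫ ω, η s ω ∂(P : Measure Ω))| := by
          ring_nf
      _ ≤ |(∫ ω, ξ t ω ∂(P : Measure Ω)) - ∫ ω, ξ s ω ∂(P : Measure Ω)| +
            |ε * ((∫ ω, η t ω ∂(P : Measure Ω)) - ∫ ω, η s ω ∂(P : Measure Ω))| := abs_add_le _ _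
      _ ≤ (1 + ε) * Real.sqrt (C * |t - s|) := by
          rw [abs_mul, abs_of_nonneg hε]
          nlinarith [Real.sqrt_nonneg (C * |t - s|), mul_le_mul_of_nonneg_left h2 hε]
  -- continuity in t of the sup, for any ε ≥ 0
  have contAux : ∀ ε : ℝ, 0 ≤ ε → ContinuousOn (fun t =>
      ⨆ P : 𝒮, ((∫ ω, ξ t ω ∂((P : ProbabilityMeasure Ω) : Measure Ω)) +
        ε * ∫ ω, η t ω ∂((P : ProbabilityMeasure Ω) : Measure Ω))) (Icc (0:ℝ) T) := by
    intro ε hε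
    refine continuousOn_of_sqrt_bound (K₀ := (1 + ε) * Real.sqrt C) (by positivity) ?_
    intro s hs t ht
    have hcomb : ∀ u (hu : u ∈ Icc (0:ℝ) T), ContinuousOn (fun P : ProbabilityMeasure Ω =>
        (∫ ω, ξ u ω ∂(P : Measure Ω)) + ε * ∫ ω, η u ω ∂(P : Measure Ω)) 𝒮 :=
      fun u hu => (hcξ u hu).add (continuousOn_const.mul (hcη u hu))
    have hb := csup_sub_csup_le (K := 𝒮) h𝒮ne
      (bddAbove_range_restrict h𝒮c (hcomb t ht)) (bddAbove_range_restrict h𝒮c (hcomb s hs))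
      (b := (1 + ε) * Real.sqrt (C * |t - s|)) (fun P hP => hdiff ε hε s hs t ht P hP)
    calc |(⨆ P : 𝒮, ((∫ ω, ξ t ω ∂((P : ProbabilityMeasure Ω) : Measure Ω)) +
            ε * ∫ ω, η t ω ∂((P : ProbabilityMeasure Ω) : Measure Ω))) -
          ⨆ P : 𝒮, ((∫ ω, ξ s ω ∂((P : ProbabilityMeasure Ω) : Measure Ω)) +
            ε * ∫ ω, η s ω ∂((P : ProbabilityMeasure Ω) : Measure Ω))|
        ≤ (1 + ε) * Real.sqrt (C * |t - s|) := hb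
      _ = (1 + ε) * Real.sqrt C * Real.sqrt |t - s| := by
          rw [Real.sqrt_mul hC, mul_assoc]
  -- Part 1
  have part1 : ∀ ε : ℝ, 0 < ε →
      ContinuousOn (fun t => sublinE 𝒮 (fun ω => ξ t ω + ε * η t ω)) (Icc (0:ℝ) T) := by
    intro ε hε
    exact (contAux ε hε.le).congr fun t ht => key t ht ε
  -- continuity of t ↦ sublinE 𝒮 (ξ t)
  have cont0 : ContinuousOn (fun t => sublinE 𝒮 (ξ t)) (Icc (0:ℝ) T) := by
    refine (contAux 0 le_rfl).congr fun t ht => ?_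
    simp only [sublinE, zero_mul, add_zero]
  -- Part 2
  have part2 : ∀ t ∈ Icc (0:ℝ) T,
      Tendsto (fun ε : ℝ => (sublinE 𝒮 (fun ω => ξ t ω + ε * η t ω) - sublinE 𝒮 (ξ t)) / ε)
        (𝓝[>] 0) (𝓝 (sublinECond 𝒮 (ξ t) (η t))) := by
    intro t ht
    have hdan := danskin h𝒮c h𝒮ne (hcξ t ht) (hcη t ht)
    refine Tendsto.congr (fun ε => ?_) hdan
    rw [key t ht ε]
    simp only [sublinE]
  -- Part 3
  refine ⟨part1, part2, ?_⟩
  have hseqpos : ∀ n : ℕ, (0:ℝ) < 1 / (n + 1) := fun n => by positivity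
  have hεseq : Tendsto (fun n : ℕ => (1:ℝ) / (n + 1)) atTop (𝓝[>] 0) :=
    tendsto_nhdsWithin_of_tendsto_nhds_of_eventually_within _
      tendsto_one_div_add_atTop_nhds_zero_nat (Eventually.of_forall fun n => hseqpos n)
  have hFmeas : ∀ n : ℕ, Measurable (fun t : Icc (0:ℝ) T =>
      (sublinE 𝒮 (fun ω => ξ ↑t ω + (1 / (n + 1 : ℝ)) * η ↑t ω) - sublinE 𝒮 (ξ ↑t)) /
        (1 / (n + 1 : ℝ))) := by
    intro n
    have hc : ContinuousOn (fun u =>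
        (sublinE 𝒮 (fun ω => ξ u ω + (1 / (n + 1 : ℝ)) * η u ω) - sublinE 𝒮 (ξ u)) /
          (1 / (n + 1 : ℝ))) (Icc (0:ℝ) T) :=
      ((part1 _ (hseqpos n)).sub cont0).div_const _
    exact hc.restrict.measurable
  have hptw : ∀ t : Icc (0:ℝ) T, Tendsto (fun n : ℕ =>
      (sublinE 𝒮 (fun ω => ξ ↑t ω + (1 / (n + 1 : ℝ)) * η ↑t ω) - sublinE 𝒮 (ξ ↑t)) /
        (1 / (n + 1 : ℝ))) atTop (𝓝 (sublinECond 𝒮 (ξ ↑t) (η ↑t))) :=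
    fun t => (part2 ↑t t.2).comp hεseq
  exact measurable_of_tendsto_metrizable hFmeas (tendsto_pi_nhds.mpr hptw)
end
end

section
/- Under assumption (B.1), the set-valued map [0,T] ∋ t ↦ 𝒫_{ξ_t|η_t} ⊆ 𝒫 has nonempty values which are compact subsets of 𝒫 for the Lévy–Prokhorov metric, and it is weakly measurable: for every subset O of 𝒫 that is open for the Lévy–Prokhorov metric, the set {t ∈ [0,T] : 𝒫_{ξ_t|η_t} ∩ O ≠ ∅} is a Borel subset of [0,T]. -/
open MeasureTheory Filter Topology Set

noncomputable section

variable {Ω : Type*} [MeasurableSpace Ω] [TopologicalSpace Ω]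

/-- `𝒫_{ξ|η} = {R ∈ 𝒫_{ξ} : E_R[η] = Ê_{ξ}[η]}`. -/
def condMaximizers (𝒮 : Set (ProbabilityMeasure Ω)) (ξ η : Ω → ℝ) :
    Set (ProbabilityMeasure Ω) :=
  {R ∈ maximizers 𝒮 ξ | ∫ ω, η ω ∂(R : Measure Ω) = sublinECond 𝒮 ξ η}

noncomputable section

namespace Stmt13Aux

/-- Attained supremum of a continuous function on a nonempty compact set. -/
lemma exists_max {α : Type*} [TopologicalSpace α] {K : Set α} (hK : IsCompact K)
    (hne : K.Nonempty) {f : α → ℝ} (hf : ContinuousOn f K) :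
    ∃ P₀ ∈ K, (∀ P ∈ K, f P ≤ f P₀) ∧ (⨆ P : K, f ↑P) = f P₀ := by
  obtain ⟨P₀, hP₀, hmax⟩ := hK.exists_isMaxOn hne hf
  have hb : ∀ P ∈ K, f P ≤ f P₀ := fun P hP => hmax hP
  refine ⟨P₀, hP₀, hb, ?_⟩
  haveI := hne.to_subtype
  refine le_antisymm (ciSup_le fun p => hb p p.2) ?_
  exact le_ciSup ⟨f P₀, by rintro x ⟨p, rfl⟩; exact hb p p.2⟩ (⟨P₀, hP₀⟩ : K)

/-- Difference of attained suprema is controlled by the uniform distance. -/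
lemma sup_diff {α : Type*} {K : Set α} {f g : α → ℝ} {Mf Mg m : ℝ}
    (hf : ∃ P ∈ K, (∀ Q ∈ K, f Q ≤ f P) ∧ Mf = f P)
    (hg : ∃ P ∈ K, (∀ Q ∈ K, g Q ≤ g P) ∧ Mg = g P)
    (hclose : ∀ P ∈ K, |f P - g P| ≤ m) : |Mf - Mg| ≤ m := by
  obtain ⟨Pf, hPf, hfmax, hMf⟩ := hf
  obtain ⟨Pg, hPg, hgmax, hMg⟩ := hg
  rw [abs_sub_le_iff]
  constructor
  · have h1 := (abs_le.mp (hclose Pf hPf)).2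
    have h2 := hgmax Pf hPf
    rw [hMf, hMg]; linarith
  · have h1 := (abs_le.mp (hclose Pg hPg)).1
    have h2 := hfmax Pg hPg
    rw [hMf, hMg]; linarith

/-- A function with a square-root modulus of continuity on a set is continuous on it. -/
lemma continuousOn_of_sqrt_mod {f : ℝ → ℝ} {A : ℝ} {s : Set ℝ} (hA : 0 ≤ A)
    (h : ∀ x ∈ s, ∀ y ∈ s, |f y - f x| ≤ A * Real.sqrt |y - x|) :
    ContinuousOn f s := by
  intro x hx
  rw [Metric.continuousWithinAt_iff]
  intro ε hε
  refine ⟨(ε / (A + 1)) ^ 2, by positivity, fun y hy hdist => ?_⟩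
  have h1 : |f y - f x| ≤ A * Real.sqrt |y - x| := h x hx y hy
  have h2 : Real.sqrt |y - x| < ε / (A + 1) := by
    have : |y - x| < (ε / (A + 1)) ^ 2 := by rwa [Real.dist_eq] at hdist
    calc Real.sqrt |y - x| < Real.sqrt ((ε / (A + 1)) ^ 2) :=
          Real.sqrt_lt_sqrt (abs_nonneg _) this
      _ = ε / (A + 1) := Real.sqrt_sq (by positivity)
  have h3 : A * (ε / (A + 1)) < ε := by
    rw [← mul_div_assoc, div_lt_iff₀ (by linarith : (0:ℝ) < A + 1)]
    nlinarith
  rw [Real.dist_eq]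
  have h4 : A * Real.sqrt |y - x| ≤ A * (ε / (A + 1)) :=
    mul_le_mul_of_nonneg_left h2.le hA
  linarith

variable {Ω : Type*} [MeasurableSpace Ω] [TopologicalSpace Ω] [OpensMeasurableSpace Ω]

/-- The integral of an `L¹(𝒮)` function is continuous on `𝒮` in the topology of weak
convergence. -/
lemma continuousOn_integral_of_memL1 {𝒮 : Set (ProbabilityMeasure Ω)} {ζ : Ω → ℝ}
    (h : MemL1 𝒮 ζ) :
    ContinuousOn (fun P : ProbabilityMeasure Ω => ∫ ω, ζ ω ∂(P : Measure Ω)) 𝒮 := by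
  obtain ⟨hmeas, hint, happrox⟩ := h
  intro P₀ hP₀
  show Tendsto _ (𝓝[𝒮] P₀) _
  rw [Metric.tendsto_nhds]
  intro ε hε
  obtain ⟨θ, hθ⟩ := happrox (ε / 4) (by linarith)
  have hcont : Tendsto (fun Q : ProbabilityMeasure Ω => ∫ ω, θ ω ∂(Q : Measure Ω))
      (𝓝[𝒮] P₀) (𝓝 (∫ ω, θ ω ∂(P₀ : Measure Ω))) :=
    ((ProbabilityMeasure.continuous_integral_boundedContinuousFunction θ).tendsto P₀).mono_left
      nhdsWithin_le_nhds
  have h1 : ∀ᶠ (Q : ProbabilityMeasure Ω) in 𝓝[𝒮] P₀,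
      dist (∫ ω, θ ω ∂(Q : Measure Ω)) (∫ ω, θ ω ∂(P₀ : Measure Ω)) < ε / 4 :=
    Metric.tendsto_nhds.mp hcont (ε / 4) (by linarith)
  have h2 : ∀ᶠ (Q : ProbabilityMeasure Ω) in 𝓝[𝒮] P₀, Q ∈ 𝒮 := self_mem_nhdsWithin
  have key : ∀ R ∈ 𝒮,
      |∫ ω, ζ ω ∂(R : Measure Ω) - ∫ ω, θ ω ∂(R : Measure Ω)| ≤ ε / 4 := by
    intro R hR
    have heq : ∫ ω, ζ ω ∂(R : Measure Ω) - ∫ ω, θ ω ∂(R : Measure Ω)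
        = ∫ ω, (ζ ω - θ ω) ∂(R : Measure Ω) :=
      (integral_sub (hint R hR) (θ.integrable _)).symm
    rw [heq]
    calc |∫ ω, (ζ ω - θ ω) ∂(R : Measure Ω)|
        ≤ ∫ ω, |ζ ω - θ ω| ∂(R : Measure Ω) := by
          simpa [Real.norm_eq_abs] using
            norm_integral_le_integral_norm (μ := (R : Measure Ω)) (fun ω => ζ ω - θ ω)
      _ ≤ ε / 4 := hθ R hR
  filter_upwards [h1, h2] with Q hQ1 hQ2
  have k1 := key Q hQ2
  have k2 := key P₀ hP₀
  rw [Real.dist_eq] at hQ1 ⊢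
  have tri : |∫ ω, ζ ω ∂(Q : Measure Ω) - ∫ ω, ζ ω ∂(P₀ : Measure Ω)|
      ≤ |∫ ω, ζ ω ∂(Q : Measure Ω) - ∫ ω, θ ω ∂(Q : Measure Ω)|
        + |∫ ω, θ ω ∂(Q : Measure Ω) - ∫ ω, θ ω ∂(P₀ : Measure Ω)|
        + |∫ ω, θ ω ∂(P₀ : Measure Ω) - ∫ ω, ζ ω ∂(P₀ : Measure Ω)| := by
    have := abs_sub_le (∫ ω, ζ ω ∂(Q : Measure Ω)) (∫ ω, θ ω ∂(Q : Measure Ω))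
      (∫ ω, ζ ω ∂(P₀ : Measure Ω))
    have := abs_sub_le (∫ ω, θ ω ∂(Q : Measure Ω)) (∫ ω, θ ω ∂(P₀ : Measure Ω))
      (∫ ω, ζ ω ∂(P₀ : Measure Ω))
    linarith [abs_sub_le (∫ ω, ζ ω ∂(Q : Measure Ω)) (∫ ω, θ ω ∂(Q : Measure Ω))
      (∫ ω, ζ ω ∂(P₀ : Measure Ω)), abs_sub_le (∫ ω, θ ω ∂(Q : Measure Ω))
      (∫ ω, θ ω ∂(P₀ : Measure Ω)) (∫ ω, ζ ω ∂(P₀ : Measure Ω))]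
  have k2' : |∫ ω, θ ω ∂(P₀ : Measure Ω) - ∫ ω, ζ ω ∂(P₀ : Measure Ω)| ≤ ε / 4 := by
    rwa [abs_sub_comm]
  linarith

/-- `∫ |f| ≤ ε + (∫ f²)/ε`. -/
lemma integral_abs_le_eps {Ω : Type*} [MeasurableSpace Ω] (μ : Measure Ω)
    [IsProbabilityMeasure μ] {f : Ω → ℝ}
    (hf1 : Integrable f μ) (hf2 : Integrable (fun ω => f ω ^ 2) μ)
    {ε D : ℝ} (hε : 0 < ε) (hD : ∫ ω, f ω ^ 2 ∂μ ≤ D) :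
    ∫ ω, |f ω| ∂μ ≤ ε + D / ε := by
  have hg : Integrable (fun ω => ε + f ω ^ 2 / ε) μ :=
    (integrable_const ε).add (hf2.div_const ε)
  have hmono : ∫ ω, |f ω| ∂μ ≤ ∫ ω, (ε + f ω ^ 2 / ε) ∂μ := by
    refine integral_mono hf1.abs hg (fun ω => ?_)
    have h1 : ε * |f ω| ≤ ε * (ε + f ω ^ 2 / ε) := by
      have he : ε * (ε + f ω ^ 2 / ε) = ε * ε + f ω ^ 2 := by field_simp
      rw [he]
      nlinarith [sq_nonneg (|f ω| - ε), sq_abs (f ω)]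
    exact le_of_mul_le_mul_left h1 hε
  have hsplit : ∫ ω, (ε + f ω ^ 2 / ε) ∂μ = ε + (∫ ω, f ω ^ 2 ∂μ) / ε := by
    rw [integral_add (integrable_const ε) (hf2.div_const ε), integral_const, integral_div]
    simp
  have : (∫ ω, f ω ^ 2 ∂μ) / ε ≤ D / ε := by gcongr
  linarith [hmono, hsplit.symm.le]

/-- Core penalization/compactness lemma. -/
lemma seq_max {α : Type*} [TopologicalSpace α] [FirstCountableTopology α]
    {𝒮 K : Set α} {I J : α → ℝ} {e e2 : ℝ}
    (hK : IsCompact K) (hKsub : K ⊆ 𝒮)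
    (hIcont : ContinuousOn I 𝒮) (hJcont : ContinuousOn J 𝒮)
    (hIle : ∀ P ∈ 𝒮, I P ≤ e)
    (Pn : ℕ → α) (hPn : ∀ n, Pn n ∈ K)
    (hpen : ∀ n : ℕ, e2 ≤ J (Pn n) + n * (I (Pn n) - e)) :
    ∃ P ∈ K, I P = e ∧ e2 ≤ J P ∧ ∀ δ > 0, ∃ n, J (Pn n) ≤ J P + δ := by
  have hKne : K.Nonempty := ⟨Pn 0, hPn 0⟩
  obtain ⟨PB, hPB, hBmax, -⟩ := exists_max hK hKne (hJcont.mono hKsub)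
  set B := J PB with hB
  have hJn_ge : ∀ n, e2 ≤ J (Pn n) := by
    intro n
    have h1 := hpen n
    have h2 : I (Pn n) ≤ e := hIle _ (hKsub (hPn n))
    have h3 : (n : ℝ) * (I (Pn n) - e) ≤ 0 :=
      mul_nonpos_of_nonneg_of_nonpos (Nat.cast_nonneg n) (by linarith)
    linarith
  obtain ⟨P, hPK, φ, hφ, hconv⟩ := hK.tendsto_subseq hPn
  have hconv𝒮 : Tendsto (fun k => Pn (φ k)) atTop (𝓝[𝒮] P) :=
    tendsto_nhdsWithin_of_tendsto_nhds_of_eventually_within _ hconv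
      (Eventually.of_forall fun k => hKsub (hPn (φ k)))
  have hJconv : Tendsto (fun k => J (Pn (φ k))) atTop (𝓝 (J P)) :=
    (hJcont P (hKsub hPK)).tendsto.comp hconv𝒮
  have hIconv : Tendsto (fun k => I (Pn (φ k))) atTop (𝓝 (I P)) :=
    (hIcont P (hKsub hPK)).tendsto.comp hconv𝒮
  have hBe2 : 0 ≤ B - e2 := by
    have := hJn_ge 0
    have := hBmax _ (hPn 0)
    linarith
  have hφk : ∀ k : ℕ, (k : ℝ) ≤ (φ k : ℝ) := fun k => by exact_mod_cast hφ.le_apply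
  have key : ∀ n : ℕ, 1 ≤ n → e - I (Pn n) ≤ (B - e2) / n := by
    intro n hn
    have h1 := hpen n
    have h2 : J (Pn n) ≤ B := hBmax _ (hPn n)
    have hn' : (0 : ℝ) < n := by exact_mod_cast hn
    rw [le_div_iff₀ hn']
    nlinarith
  have hlim : Tendsto (fun k : ℕ => (B - e2) / (φ k : ℝ)) atTop (𝓝 0) := by
    refine tendsto_of_tendsto_of_tendsto_of_le_of_le' tendsto_const_nhds
      (tendsto_const_div_atTop_nhds_zero_nat (B - e2)) ?_ ?_
    · exact Eventually.of_forall fun k => div_nonneg hBe2 (Nat.cast_nonneg _)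
    · filter_upwards [eventually_ge_atTop 1] with k hk
      have hk' : (0 : ℝ) < (k : ℝ) := by exact_mod_cast hk
      exact div_le_div_of_nonneg_left hBe2 hk' (hφk k) |>.trans_eq rfl
  have hIP : I P = e := by
    have hle : I P ≤ e := hIle _ (hKsub hPK)
    have h1 : Tendsto (fun k => e - I (Pn (φ k))) atTop (𝓝 (e - I P)) :=
      tendsto_const_nhds.sub hIconv
    have h2 : e - I P ≤ 0 := by
      refine le_of_tendsto_of_tendsto h1 hlim ?_
      filter_upwards [eventually_ge_atTop 1] with k hk
      exact key (φ k) (le_trans hk hφ.le_apply)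
    linarith
  have hJP : e2 ≤ J P :=
    ge_of_tendsto hJconv (Eventually.of_forall fun k => hJn_ge (φ k))
  refine ⟨P, hPK, hIP, hJP, fun δ hδ => ?_⟩
  obtain ⟨N, hN⟩ := Metric.tendsto_atTop.mp hJconv δ hδ
  have := hN N le_rfl
  rw [Real.dist_eq] at this
  exact ⟨φ N, by linarith [(abs_le.mp this.le).2]⟩

end Stmt13Aux
/-- under (B.1), the set-valued map `t ↦ 𝒫_{ξ_t|η_t}` has nonempty values that
are compact for the Lévy–Prokhorov metric, and it is weakly measurable: for every set `O`
of probability measures that is open for the Lévy–Prokhorov metric, the set of `t ∈ [0,T]`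
with `𝒫_{ξ_t|η_t} ∩ O ≠ ∅` is Borel. -/
theorem stmt_13 {Ω : Type*} [MeasurableSpace Ω] [MetricSpace Ω]
    [TopologicalSpace.SeparableSpace Ω] [CompleteSpace Ω] [BorelSpace Ω]
    (𝒮 : Set (ProbabilityMeasure Ω)) (h𝒮ne : 𝒮.Nonempty) (h𝒮c : IsCompact 𝒮)
    (T : ℝ) (hT : 0 < T) (ξ η : ℝ → Ω → ℝ)
    (hξ : ∀ t ∈ Icc (0:ℝ) T, MemL1 𝒮 (ξ t)) (hη : ∀ t ∈ Icc (0:ℝ) T, MemL1 𝒮 (η t))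
    (hξ2 : ∀ t ∈ Icc (0:ℝ) T, ∀ P ∈ 𝒮, Integrable (fun ω => (ξ t ω) ^ 2) (P : Measure Ω))
    (hη2 : ∀ t ∈ Icc (0:ℝ) T, ∀ P ∈ 𝒮, Integrable (fun ω => (η t ω) ^ 2) (P : Measure Ω))
    (C : ℝ) (hC : 0 ≤ C)
    (hB1 : ∀ s ∈ Icc (0:ℝ) T, ∀ t ∈ Icc (0:ℝ) T, ∀ P ∈ 𝒮,
      ∫ ω, (|ξ t ω - ξ s ω| ^ 2 + |η t ω - η s ω| ^ 2) ∂(P : Measure Ω) ≤ C * |t - s|) :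
    (∀ t ∈ Icc (0:ℝ) T,
      (condMaximizers 𝒮 (ξ t) (η t)).Nonempty ∧
      condMaximizers 𝒮 (ξ t) (η t) ⊆ 𝒮 ∧
      IsCompact
        (LevyProkhorov.toMeasureEquiv (α := ProbabilityMeasure Ω) ⁻¹' condMaximizers 𝒮 (ξ t) (η t))) ∧
    (∀ O : Set (ProbabilityMeasure Ω),
      IsOpen (LevyProkhorov.toMeasureEquiv (α := ProbabilityMeasure Ω) ⁻¹' O) →
      MeasurableSet
        {t : ℝ | t ∈ Icc (0:ℝ) T ∧ (condMaximizers 𝒮 (ξ t) (η t) ∩ O).Nonempty}) := by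
  classical
  have h𝒮closed : IsClosed 𝒮 := h𝒮c.isClosed
  set IF : ℝ → ProbabilityMeasure Ω → ℝ := fun t P => ∫ ω, ξ t ω ∂(P : Measure Ω) with hIF
  set JF : ℝ → ProbabilityMeasure Ω → ℝ := fun t P => ∫ ω, η t ω ∂(P : Measure Ω) with hJF
  set EE : ℝ → ℝ := fun t => sublinE 𝒮 (ξ t) with hEE
  set E2 : ℝ → ℝ := fun t => sublinECond 𝒮 (ξ t) (η t) with hE2
  -- continuity in P
  have hIcont : ∀ t ∈ Icc (0:ℝ) T, ContinuousOn (IF t) 𝒮 :=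
    fun t ht => Stmt13Aux.continuousOn_integral_of_memL1 (hξ t ht)
  have hJcont : ∀ t ∈ Icc (0:ℝ) T, ContinuousOn (JF t) 𝒮 :=
    fun t ht => Stmt13Aux.continuousOn_integral_of_memL1 (hη t ht)
  -- modulus of continuity in t
  set κ : ℝ := 2 * Real.sqrt (C + 1) with hκdef
  have hκ : 0 ≤ κ := by positivity
  have hC1 : (0:ℝ) < C + 1 := by linarith
  have hmod : ∀ s ∈ Icc (0:ℝ) T, ∀ t ∈ Icc (0:ℝ) T, ∀ P ∈ 𝒮,
      |IF t P - IF s P| ≤ κ * Real.sqrt |t - s| ∧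
      |JF t P - JF s P| ≤ κ * Real.sqrt |t - s| := by
    intro s hs t ht P hP
    rcases eq_or_ne t s with rfl | hne
    · constructor <;> · simp only [sub_self, abs_zero]
                        positivity
    · have hhpos : 0 < |t - s| := abs_pos.mpr (sub_ne_zero.mpr hne)
      have hDpos : 0 < (C + 1) * |t - s| := mul_pos hC1 hhpos
      have hεpos : 0 < Real.sqrt ((C + 1) * |t - s|) := Real.sqrt_pos.mpr hDpos
      have heq : Real.sqrt ((C + 1) * |t - s|)
          + ((C + 1) * |t - s|) / Real.sqrt ((C + 1) * |t - s|) = κ * Real.sqrt |t - s| := by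
        rw [Real.div_sqrt, ← two_mul, Real.sqrt_mul hC1.le, hκdef]
        ring
      have hmξ : Measurable (fun ω => ξ t ω - ξ s ω) := ((hξ t ht).1.sub (hξ s hs).1)
      have hmη : Measurable (fun ω => η t ω - η s ω) := ((hη t ht).1.sub (hη s hs).1)
      have hint_ξ : Integrable (fun ω => ξ t ω - ξ s ω) (P : Measure Ω) :=
        ((hξ t ht).2.1 P hP).sub ((hξ s hs).2.1 P hP)
      have hint_η : Integrable (fun ω => η t ω - η s ω) (P : Measure Ω) :=
        ((hη t ht).2.1 P hP).sub ((hη s hs).2.1 P hP)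
      have hint_ξ2 : Integrable (fun ω => (ξ t ω - ξ s ω) ^ 2) (P : Measure Ω) := by
        refine Integrable.mono' (((hξ2 t ht P hP).const_mul 2).add ((hξ2 s hs P hP).const_mul 2))
          ((hmξ.pow_const 2).aestronglyMeasurable) (Eventually.of_forall fun ω => ?_)
        rw [Real.norm_eq_abs, abs_of_nonneg (sq_nonneg _)]
        simp only [Pi.add_apply]
        nlinarith [sq_nonneg (ξ t ω + ξ s ω)]
      have hint_η2 : Integrable (fun ω => (η t ω - η s ω) ^ 2) (P : Measure Ω) := by
        refine Integrable.mono' (((hη2 t ht P hP).const_mul 2).add ((hη2 s hs P hP).const_mul 2))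
          ((hmη.pow_const 2).aestronglyMeasurable) (Eventually.of_forall fun ω => ?_)
        rw [Real.norm_eq_abs, abs_of_nonneg (sq_nonneg _)]
        simp only [Pi.add_apply]
        nlinarith [sq_nonneg (η t ω + η s ω)]
      have hint_sum : Integrable (fun ω => |ξ t ω - ξ s ω| ^ 2 + |η t ω - η s ω| ^ 2)
          (P : Measure Ω) := by
        refine Integrable.add (hint_ξ2.congr ?_) (hint_η2.congr ?_) <;>
          exact Eventually.of_forall fun ω => (sq_abs _).symm
      have hBsum : ∫ ω, (|ξ t ω - ξ s ω| ^ 2 + |η t ω - η s ω| ^ 2) ∂(P : Measure Ω)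
          ≤ (C + 1) * |t - s| := by
        have h2 := hB1 s hs t ht P hP
        nlinarith
      have hDξ : ∫ ω, (ξ t ω - ξ s ω) ^ 2 ∂(P : Measure Ω) ≤ (C + 1) * |t - s| := by
        refine le_trans (integral_mono hint_ξ2 hint_sum (fun ω => ?_)) hBsum
        nlinarith [sq_abs (ξ t ω - ξ s ω), sq_nonneg (|η t ω - η s ω|)]
      have hDη : ∫ ω, (η t ω - η s ω) ^ 2 ∂(P : Measure Ω) ≤ (C + 1) * |t - s| := by
        refine le_trans (integral_mono hint_η2 hint_sum (fun ω => ?_)) hBsum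
        nlinarith [sq_abs (η t ω - η s ω), sq_nonneg (|ξ t ω - ξ s ω|)]
      constructor
      · have habs : |IF t P - IF s P| ≤ ∫ ω, |ξ t ω - ξ s ω| ∂(P : Measure Ω) := by
          rw [hIF]
          simp only
          rw [← integral_sub ((hξ t ht).2.1 P hP) ((hξ s hs).2.1 P hP)]
          simpa [Real.norm_eq_abs] using
            norm_integral_le_integral_norm (μ := (P : Measure Ω)) (fun ω => ξ t ω - ξ s ω)
        have := Stmt13Aux.integral_abs_le_eps (P : Measure Ω) hint_ξ hint_ξ2 hεpos hDξ
        linarith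
      · have habs : |JF t P - JF s P| ≤ ∫ ω, |η t ω - η s ω| ∂(P : Measure Ω) := by
          rw [hJF]
          simp only
          rw [← integral_sub ((hη t ht).2.1 P hP) ((hη s hs).2.1 P hP)]
          simpa [Real.norm_eq_abs] using
            norm_integral_le_integral_norm (μ := (P : Measure Ω)) (fun ω => η t ω - η s ω)
        have := Stmt13Aux.integral_abs_le_eps (P : Measure Ω) hint_η hint_η2 hεpos hDη
        linarith
  have hmodI : ∀ s ∈ Icc (0:ℝ) T, ∀ t ∈ Icc (0:ℝ) T, ∀ P ∈ 𝒮,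
      |IF t P - IF s P| ≤ κ * Real.sqrt |t - s| := fun s hs t ht P hP => (hmod s hs t ht P hP).1
  have hmodJ : ∀ s ∈ Icc (0:ℝ) T, ∀ t ∈ Icc (0:ℝ) T, ∀ P ∈ 𝒮,
      |JF t P - JF s P| ≤ κ * Real.sqrt |t - s| := fun s hs t ht P hP => (hmod s hs t ht P hP).2
  -- maxima of IF over 𝒮
  have hmaxI : ∀ t ∈ Icc (0:ℝ) T, ∃ P₀ ∈ 𝒮, (∀ P ∈ 𝒮, IF t P ≤ IF t P₀) ∧ EE t = IF t P₀ := by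
    intro t ht
    obtain ⟨P₀, h1, h2, h3⟩ := Stmt13Aux.exists_max h𝒮c h𝒮ne (hIcont t ht)
    exact ⟨P₀, h1, h2, h3⟩
  have hIle : ∀ t ∈ Icc (0:ℝ) T, ∀ P ∈ 𝒮, IF t P ≤ EE t := by
    intro t ht P hP
    obtain ⟨P₀, h1, h2, h3⟩ := hmaxI t ht
    rw [h3]; exact h2 P hP
  have hMeq : ∀ t : ℝ, maximizers 𝒮 (ξ t) = 𝒮 ∩ (IF t) ⁻¹' {EE t} := by
    intro t
    ext P
    simp only [maximizers, Set.mem_setOf_eq, Set.mem_inter_iff, Set.mem_preimage,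
      Set.mem_singleton_iff]
    exact Iff.rfl
  have hMsub : ∀ t : ℝ, maximizers 𝒮 (ξ t) ⊆ 𝒮 := fun t P hP => hP.1
  have hMclosed : ∀ t ∈ Icc (0:ℝ) T, IsClosed (maximizers 𝒮 (ξ t)) := by
    intro t ht
    rw [hMeq]
    exact (hIcont t ht).preimage_isClosed_of_isClosed h𝒮closed isClosed_singleton
  have hMcomp : ∀ t ∈ Icc (0:ℝ) T, IsCompact (maximizers 𝒮 (ξ t)) :=
    fun t ht => h𝒮c.of_isClosed_subset (hMclosed t ht) (hMsub t)
  have hMne : ∀ t ∈ Icc (0:ℝ) T, (maximizers 𝒮 (ξ t)).Nonempty := by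
    intro t ht
    obtain ⟨P₀, h1, h2, h3⟩ := hmaxI t ht
    exact ⟨P₀, h1, h3.symm⟩
  -- maxima of JF over maximizers
  have hmaxJ : ∀ t ∈ Icc (0:ℝ) T, ∃ R₀ ∈ maximizers 𝒮 (ξ t),
      (∀ R ∈ maximizers 𝒮 (ξ t), JF t R ≤ JF t R₀) ∧ E2 t = JF t R₀ := by
    intro t ht
    obtain ⟨R₀, h1, h2, h3⟩ := Stmt13Aux.exists_max (hMcomp t ht) (hMne t ht)
      ((hJcont t ht).mono (hMsub t))
    exact ⟨R₀, h1, h2, h3⟩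
  have hJle : ∀ t ∈ Icc (0:ℝ) T, ∀ R ∈ maximizers 𝒮 (ξ t), JF t R ≤ E2 t := by
    intro t ht R hR
    obtain ⟨R₀, h1, h2, h3⟩ := hmaxJ t ht
    rw [h3]; exact h2 R hR
  have hFsub : ∀ t : ℝ, condMaximizers 𝒮 (ξ t) (η t) ⊆ maximizers 𝒮 (ξ t) := fun t R hR => hR.1
  have hFne : ∀ t ∈ Icc (0:ℝ) T, (condMaximizers 𝒮 (ξ t) (η t)).Nonempty := by
    intro t ht
    obtain ⟨R₀, h1, h2, h3⟩ := hmaxJ t ht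
    exact ⟨R₀, h1, h3.symm⟩
  have hFclosed : ∀ t ∈ Icc (0:ℝ) T, IsClosed (condMaximizers 𝒮 (ξ t) (η t)) := by
    intro t ht
    have heq : condMaximizers 𝒮 (ξ t) (η t) = maximizers 𝒮 (ξ t) ∩ (JF t) ⁻¹' {E2 t} := by
      ext R
      simp only [condMaximizers, Set.mem_setOf_eq, Set.mem_inter_iff, Set.mem_preimage,
        Set.mem_singleton_iff]
      exact Iff.rfl
    rw [heq]
    exact ((hJcont t ht).mono (hMsub t)).preimage_isClosed_of_isClosed (hMclosed t ht)
      isClosed_singleton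
  have hFcomp : ∀ t ∈ Icc (0:ℝ) T, IsCompact (condMaximizers 𝒮 (ξ t) (η t)) :=
    fun t ht => (hMcomp t ht).of_isClosed_subset (hFclosed t ht) (hFsub t)
  constructor
  · -- Part 1
    intro t ht
    refine ⟨hFne t ht, fun R hR => hR.1.1, ?_⟩
    exact (LevyProkhorov.probabilityMeasureHomeomorph
      (Ω := Ω)).symm.isCompact_preimage.mpr (hFcomp t ht)
  · -- Part 2
    intro O hO
    set ho := LevyProkhorov.probabilityMeasureHomeomorph (Ω := Ω) with hho
    -- attained maxima of the penalized functionals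
    have hgmax : ∀ Kc : Set (ProbabilityMeasure Ω), Kc ⊆ 𝒮 → IsCompact Kc → Kc.Nonempty →
        ∀ n : ℕ, ∀ t ∈ Icc (0:ℝ) T, ∃ Q ∈ Kc,
          (∀ P ∈ Kc, JF t P + n * (IF t P - EE t) ≤ JF t Q + n * (IF t Q - EE t)) ∧
          (⨆ P : Kc, (JF t ↑P + n * (IF t ↑P - EE t))) = JF t Q + n * (IF t Q - EE t) := by
      intro Kc hsub hKc hne n t ht
      exact Stmt13Aux.exists_max hKc hne
        (((hJcont t ht).mono hsub).add (continuousOn_const.mul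
          (((hIcont t ht).mono hsub).sub continuousOn_const)))
    -- continuity in t of the penalized sups
    have hgmod : ∀ Kc : Set (ProbabilityMeasure Ω), Kc ⊆ 𝒮 → IsCompact Kc → Kc.Nonempty →
        ∀ n : ℕ, ContinuousOn
          (fun t => ⨆ P : Kc, (JF t ↑P + n * (IF t ↑P - EE t))) (Icc (0:ℝ) T) := by
      intro Kc hsub hKc hne n
      have hA : (0:ℝ) ≤ (1 + 2 * (n:ℝ)) * κ := by positivity
      apply Stmt13Aux.continuousOn_of_sqrt_mod hA
      intro s hs t ht
      refine Stmt13Aux.sup_diff (hgmax Kc hsub hKc hne n t ht) (hgmax Kc hsub hKc hne n s hs) ?_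
      intro P hP
      have h1 := hmodJ s hs t ht P (hsub hP)
      have h2 := hmodI s hs t ht P (hsub hP)
      have h3 : |EE t - EE s| ≤ κ * Real.sqrt |t - s| :=
        Stmt13Aux.sup_diff (hmaxI t ht) (hmaxI s hs) (fun Q hQ => hmodI s hs t ht Q hQ)
      have hrw : (JF t P + (n:ℝ) * (IF t P - EE t)) - (JF s P + (n:ℝ) * (IF s P - EE s))
          = (JF t P - JF s P) + (n:ℝ) * ((IF t P - IF s P) - (EE t - EE s)) := by ring
      rw [hrw]
      have hn0 : (0:ℝ) ≤ (n:ℝ) := Nat.cast_nonneg n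
      calc |(JF t P - JF s P) + (n:ℝ) * ((IF t P - IF s P) - (EE t - EE s))|
          ≤ |JF t P - JF s P| + |(n:ℝ) * ((IF t P - IF s P) - (EE t - EE s))| := abs_add_le _ _
        _ ≤ |JF t P - JF s P| + (n:ℝ) * (|IF t P - IF s P| + |EE t - EE s|) := by
            rw [abs_mul, Nat.abs_cast]
            have h4 := abs_sub (IF t P - IF s P) (EE t - EE s)
            nlinarith
        _ ≤ κ * Real.sqrt |t - s| + (n:ℝ) * (2 * (κ * Real.sqrt |t - s|)) := by
            have h5 := mul_le_mul_of_nonneg_left (add_le_add h2 h3) hn0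
            linarith
        _ = (1 + 2 * (n:ℝ)) * κ * Real.sqrt |t - s| := by ring
    -- E2 is below every penalized sup over 𝒮
    have hE2le : ∀ t ∈ Icc (0:ℝ) T, ∀ n : ℕ,
        E2 t ≤ ⨆ P : (𝒮 : Set (ProbabilityMeasure Ω)), (JF t ↑P + n * (IF t ↑P - EE t)) := by
      intro t ht n
      obtain ⟨R₀, hR₀, hRmax, hRsup⟩ := hmaxJ t ht
      obtain ⟨Q, hQK, hQmax, hQsup⟩ := hgmax 𝒮 subset_rfl h𝒮c h𝒮ne n t ht
      rw [hQsup, hRsup]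
      have h1 := hQmax R₀ (hMsub t hR₀)
      have hIR : IF t R₀ = EE t := hR₀.2
      rw [hIR] at h1
      simpa using h1
    -- characterization of nonempty intersection with a closed set
    have hchar : ∀ D : Set (ProbabilityMeasure Ω), IsClosed D → (𝒮 ∩ D).Nonempty →
        ∀ t ∈ Icc (0:ℝ) T,
          ((condMaximizers 𝒮 (ξ t) (η t) ∩ D).Nonempty ↔
            ∀ n : ℕ, E2 t ≤ ⨆ P : ((𝒮 ∩ D) : Set (ProbabilityMeasure Ω)),
              (JF t ↑P + n * (IF t ↑P - EE t))) := by
      intro D hD hKne t ht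
      have hKc : IsCompact (𝒮 ∩ D) := h𝒮c.inter_right hD
      constructor
      · rintro ⟨P, hPF, hPD⟩ n
        obtain ⟨Q, hQK, hQmax, hQsup⟩ := hgmax (𝒮 ∩ D) inter_subset_left hKc hKne n t ht
        rw [hQsup]
        have h1 := hQmax P ⟨hPF.1.1, hPD⟩
        have hIP : IF t P = EE t := hPF.1.2
        have hJP : JF t P = E2 t := hPF.2
        rw [hIP, hJP] at h1
        simpa using h1
      · intro hall
        choose Q hQmem hQmax hQsup using
          fun n : ℕ => hgmax (𝒮 ∩ D) inter_subset_left hKc hKne n t ht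
        have hpen : ∀ n : ℕ, E2 t ≤ JF t (Q n) + n * (IF t (Q n) - EE t) := by
          intro n
          have h := hall n
          rwa [hQsup n] at h
        obtain ⟨P, hPK, hIP, hJP, -⟩ := Stmt13Aux.seq_max hKc inter_subset_left (hIcont t ht)
          (hJcont t ht) (hIle t ht) Q hQmem hpen
        have hPM : P ∈ maximizers 𝒮 (ξ t) := ⟨hPK.1, hIP⟩
        exact ⟨P, ⟨hPM, le_antisymm (hJle t ht P hPM) hJP⟩, hPK.2⟩
    -- E2 as a countable infimum
    have hE2eq : ∀ t ∈ Icc (0:ℝ) T,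
        E2 t = ⨅ n : ℕ, ⨆ P : (𝒮 : Set (ProbabilityMeasure Ω)),
          (JF t ↑P + n * (IF t ↑P - EE t)) := by
      intro t ht
      have hbdd : BddBelow (range fun n : ℕ =>
          ⨆ P : (𝒮 : Set (ProbabilityMeasure Ω)), (JF t ↑P + n * (IF t ↑P - EE t))) :=
        ⟨E2 t, by rintro x ⟨n, rfl⟩; exact hE2le t ht n⟩
      refine le_antisymm (le_ciInf (hE2le t ht)) ?_
      by_contra hcon
      push_neg at hcon
      choose Q hQmem hQmax hQsup using fun n : ℕ => hgmax 𝒮 subset_rfl h𝒮c h𝒮ne n t ht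
      have hpen : ∀ n : ℕ, E2 t ≤ JF t (Q n) + n * (IF t (Q n) - EE t) := by
        intro n
        have h := hE2le t ht n
        rwa [hQsup n] at h
      obtain ⟨P, hPK, hIP, hJP, hnear⟩ := Stmt13Aux.seq_max h𝒮c subset_rfl (hIcont t ht)
        (hJcont t ht) (hIle t ht) Q hQmem hpen
      have hPM : P ∈ maximizers 𝒮 (ξ t) := ⟨hPK, hIP⟩
      have hJPle : JF t P ≤ E2 t := hJle t ht P hPM
      set L := ⨅ n : ℕ, ⨆ P : (𝒮 : Set (ProbabilityMeasure Ω)),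
        (JF t ↑P + n * (IF t ↑P - EE t)) with hL
      obtain ⟨n, hn⟩ := hnear ((L - E2 t) / 2) (by linarith)
      have h1 : L ≤ ⨆ P : (𝒮 : Set (ProbabilityMeasure Ω)),
          (JF t ↑P + n * (IF t ↑P - EE t)) := ciInf_le hbdd n
      have h2 := hQsup n
      have h3 : (n:ℝ) * (IF t (Q n) - EE t) ≤ 0 :=
        mul_nonpos_of_nonneg_of_nonpos (Nat.cast_nonneg n)
          (by linarith [hIle t ht (Q n) (hQmem n)])
      rw [h2] at h1
      linarith
    -- measurability for a fixed closed set
    have hDmeas : ∀ D : Set (ProbabilityMeasure Ω), IsClosed D →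
        MeasurableSet {t : ℝ | t ∈ Icc (0:ℝ) T ∧
          (condMaximizers 𝒮 (ξ t) (η t) ∩ D).Nonempty} := by
      intro D hD
      by_cases hKne : (𝒮 ∩ D).Nonempty
      · have hseteq : {t : ℝ | t ∈ Icc (0:ℝ) T ∧ (condMaximizers 𝒮 (ξ t) (η t) ∩ D).Nonempty}
            = ⋂ n : ℕ, (Subtype.val '' {x : (Icc (0:ℝ) T) |
                (⨅ m : ℕ, ⨆ P : (𝒮 : Set (ProbabilityMeasure Ω)),
                  (JF ↑x ↑P + m * (IF ↑x ↑P - EE ↑x)))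
                ≤ ⨆ P : ((𝒮 ∩ D) : Set (ProbabilityMeasure Ω)),
                  (JF ↑x ↑P + n * (IF ↑x ↑P - EE ↑x))}) := by
          ext t
          simp only [mem_setOf_eq, mem_iInter, mem_image, Subtype.exists, exists_and_right,
            exists_eq_right]
          constructor
          · rintro ⟨ht, hne⟩ n
            refine ⟨ht, ?_⟩
            have h := (hchar D hD hKne t ht).mp hne n
            rw [← hE2eq t ht]
            exact h
          · intro h
            obtain ⟨ht, -⟩ := h 0
            refine ⟨ht, (hchar D hD hKne t ht).mpr fun n => ?_⟩
            obtain ⟨ht2, hle⟩ := h n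
            rw [hE2eq t ht]
            exact hle
        rw [hseteq]
        refine MeasurableSet.iInter fun n => ?_
        refine MeasurableSet.subtype_image measurableSet_Icc ?_
        have hmeas1 : Measurable (fun x : (Icc (0:ℝ) T) =>
            ⨅ m : ℕ, ⨆ P : (𝒮 : Set (ProbabilityMeasure Ω)),
              (JF ↑x ↑P + m * (IF ↑x ↑P - EE ↑x))) := by
          apply measurable_of_tendsto_metrizable
            (f := fun m (x : (Icc (0:ℝ) T)) =>
              ⨆ P : (𝒮 : Set (ProbabilityMeasure Ω)), (JF ↑x ↑P + m * (IF ↑x ↑P - EE ↑x)))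
          · intro m
            exact ((hgmod 𝒮 subset_rfl h𝒮c h𝒮ne m).restrict).measurable
          · rw [tendsto_pi_nhds]
            intro x
            apply tendsto_atTop_ciInf
            · intro a b hab
              dsimp only
              obtain ⟨Qb, hQbK, hQbmax, hQbsup⟩ := hgmax 𝒮 subset_rfl h𝒮c h𝒮ne b ↑x x.2
              obtain ⟨Qa, hQaK, hQamax, hQasup⟩ := hgmax 𝒮 subset_rfl h𝒮c h𝒮ne a ↑x x.2
              rw [hQbsup, hQasup]
              have hIQ : IF ↑x Qb - EE ↑x ≤ 0 := by linarith [hIle ↑x x.2 Qb hQbK]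
              have hab2 : (a:ℝ) ≤ (b:ℝ) := by exact_mod_cast hab
              have h1 : JF ↑x Qb + (b:ℝ) * (IF ↑x Qb - EE ↑x)
                  ≤ JF ↑x Qb + (a:ℝ) * (IF ↑x Qb - EE ↑x) := by nlinarith
              exact h1.trans (hQamax Qb hQbK)
            · exact ⟨E2 ↑x, by rintro y ⟨m, rfl⟩; exact hE2le ↑x x.2 m⟩
        have hmeas2 : Measurable (fun x : (Icc (0:ℝ) T) =>
            ⨆ P : ((𝒮 ∩ D) : Set (ProbabilityMeasure Ω)),
              (JF ↑x ↑P + n * (IF ↑x ↑P - EE ↑x))) :=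
          ((hgmod (𝒮 ∩ D) inter_subset_left (h𝒮c.inter_right hD) hKne n).restrict).measurable
        exact measurableSet_le hmeas1 hmeas2
      · have hempty : {t : ℝ | t ∈ Icc (0:ℝ) T ∧
            (condMaximizers 𝒮 (ξ t) (η t) ∩ D).Nonempty} = ∅ := by
          ext t
          simp only [mem_setOf_eq, mem_empty_iff_false, iff_false, not_and]
          rintro ht ⟨P, hPF, hPD⟩
          exact hKne ⟨P, hPF.1.1, hPD⟩
        rw [hempty]
        exact MeasurableSet.empty
    -- decompose O as a countable union of closed sets
    have hGδ : IsGδ ((⇑(LevyProkhorov.toMeasureEquiv (α := ProbabilityMeasure Ω)) ⁻¹' O)ᶜ) :=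
      hO.isClosed_compl.isGδ
    obtain ⟨U, hUopen, hUeq⟩ := isGδ_iff_eq_iInter_nat.mp hGδ
    have hDn_closed : ∀ n : ℕ, IsClosed (⇑ho ⁻¹' (U n)ᶜ) :=
      fun n => ((hUopen n).isClosed_compl).preimage ho.continuous
    have hOeq : O = ⋃ n : ℕ, ⇑ho ⁻¹' (U n)ᶜ := by
      have h1 : (⇑(LevyProkhorov.toMeasureEquiv (α := ProbabilityMeasure Ω)) ⁻¹' O) = ⋃ n, (U n)ᶜ := by
        rw [← compl_iInter, ← hUeq, compl_compl]
      have h2 : O = ⇑ho ⁻¹' (⇑(LevyProkhorov.toMeasureEquiv (α := ProbabilityMeasure Ω)) ⁻¹' O) := rfl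
      rw [h2, h1, preimage_iUnion]
    have hsplit : {t : ℝ | t ∈ Icc (0:ℝ) T ∧ (condMaximizers 𝒮 (ξ t) (η t) ∩ O).Nonempty}
        = ⋃ n : ℕ, {t : ℝ | t ∈ Icc (0:ℝ) T ∧
            (condMaximizers 𝒮 (ξ t) (η t) ∩ (⇑ho ⁻¹' (U n)ᶜ)).Nonempty} := by
      ext t
      simp only [mem_setOf_eq, mem_iUnion]
      constructor
      · rintro ⟨ht, P, hPF, hPO⟩
        rw [hOeq] at hPO
        obtain ⟨n, hn⟩ := mem_iUnion.mp hPO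
        exact ⟨n, ht, P, hPF, hn⟩
      · rintro ⟨n, ht, P, hPF, hPD⟩
        refine ⟨ht, P, hPF, ?_⟩
        rw [hOeq]
        exact mem_iUnion.mpr ⟨n, hPD⟩
    rw [hsplit]
    exact MeasurableSet.iUnion fun n => hDmeas _ (hDn_closed n)
end
end
end

section
/- Under assumption (B.1), there exists a map R : [0,T] → 𝒫, Borel measurable with respect to the Borel σ-field of [0,T] and the Borel σ-field generated on 𝒫 by the Lévy–Prokhorov metric, such that R_t ∈ 𝒫_{ξ_t|η_t} for every t ∈ [0,T]. -/
set_option linter.unusedSectionVars false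
set_option maxHeartbeats 1000000


open MeasureTheory Filter Topology Set

noncomputable section

variable {Ω : Type*} [MeasurableSpace Ω] [TopologicalSpace Ω]

section AuxOrder

variable {α : Type*}

private lemma csInf_image_eq_of_min {s : Set α} {f : α → ℝ} {p : α} (hp : p ∈ s)
    (hmin : ∀ q ∈ s, f p ≤ f q) : sInf (f '' s) = f p :=
  le_antisymm
    (csInf_le ⟨f p, by rintro r ⟨q, hq, rfl⟩; exact hmin q hq⟩ (mem_image_of_mem f hp))
    (le_csInf (Set.Nonempty.image f ⟨p, hp⟩) (by rintro r ⟨q, hq, rfl⟩; exact hmin q hq))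

private lemma csSup_image_eq_of_max {s : Set α} {f : α → ℝ} {p : α} (hp : p ∈ s)
    (hmax : ∀ q ∈ s, f q ≤ f p) : sSup (f '' s) = f p :=
  le_antisymm
    (csSup_le ((Set.Nonempty.image f ⟨p, hp⟩)) (by rintro r ⟨q, hq, rfl⟩; exact hmax q hq))
    (le_csSup ⟨f p, by rintro r ⟨q, hq, rfl⟩; exact hmax q hq⟩ (mem_image_of_mem f hp))

end AuxOrder

section AuxCompact

variable {K : Type*} [MetricSpace K] [CompactSpace K] [Nonempty K]

private lemma bdd_below_range_cont {f : K → ℝ} (hf : Continuous f) : BddBelow (Set.range f) :=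
  (isCompact_range hf).bddBelow

private lemma bdd_above_range_cont {f : K → ℝ} (hf : Continuous f) : BddAbove (Set.range f) :=
  (isCompact_range hf).bddAbove

private lemma exists_forall_le_cont {f : K → ℝ} (hf : Continuous f) : ∃ p, ∀ q, f p ≤ f q := by
  obtain ⟨p, -, hp⟩ := isCompact_univ.exists_isMinOn univ_nonempty hf.continuousOn
  exact ⟨p, fun q => hp (mem_univ q)⟩

private lemma exists_forall_ge_cont {f : K → ℝ} (hf : Continuous f) : ∃ p, ∀ q, f q ≤ f p := by
  obtain ⟨p, -, hp⟩ := isCompact_univ.exists_isMaxOn univ_nonempty hf.continuousOn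
  exact ⟨p, fun q => hp (mem_univ q)⟩

private lemma iInf_eq_of_min {f : K → ℝ} (hf : Continuous f) {p : K} (hp : ∀ q, f p ≤ f q) :
    (⨅ q, f q) = f p :=
  le_antisymm (ciInf_le (bdd_below_range_cont hf) p) (le_ciInf hp)

private lemma iSup_eq_of_max {f : K → ℝ} (hf : Continuous f) {p : K} (hp : ∀ q, f q ≤ f p) :
    (⨆ q, f q) = f p :=
  le_antisymm (ciSup_le hp) (le_ciSup (bdd_above_range_cont hf) p)

private lemma continuous_iInf_compact {α : Type*} [TopologicalSpace α] {g : α → K → ℝ}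
    (hg : Continuous fun z : α × K => g z.1 z.2) : Continuous fun a => ⨅ p, g a p := by
  have hga : ∀ a, Continuous (g a) := fun a => hg.comp (Continuous.prodMk_right a)
  rw [continuous_iff_continuousAt]
  intro a₀
  rw [ContinuousAt, Metric.tendsto_nhds]
  intro ε hε
  obtain ⟨p₀, hp₀⟩ := exists_forall_le_cont (hga a₀)
  have hm₀ : (⨅ q, g a₀ q) = g a₀ p₀ := iInf_eq_of_min (hga a₀) hp₀
  have hcont1 : Continuous fun a => g a p₀ :=
    hg.comp (continuous_id.prodMk continuous_const)
  have h1 : ∀ᶠ a in 𝓝 a₀, g a p₀ < (⨅ q, g a₀ q) + ε / 2 := by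
    have hlt : g a₀ p₀ < (⨅ q, g a₀ q) + ε / 2 := by rw [hm₀]; linarith
    exact (hcont1.tendsto a₀) (Iio_mem_nhds hlt)
  have hopen : IsOpen {z : α × K | (⨅ q, g a₀ q) - ε / 2 < g z.1 z.2} :=
    isOpen_lt continuous_const hg
  have hsub : {a₀} ×ˢ (univ : Set K) ⊆ {z : α × K | (⨅ q, g a₀ q) - ε / 2 < g z.1 z.2} := by
    rintro ⟨a, p⟩ hz
    obtain ⟨ha, -⟩ := hz
    rcases mem_singleton_iff.mp ha with rfl
    have : (⨅ q, g a q) ≤ g a p := ciInf_le (bdd_below_range_cont (hga a)) p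
    simp only [mem_setOf_eq]
    linarith
  obtain ⟨U, V, hU, hV, haU, hVuniv, hUV⟩ :=
    generalized_tube_lemma isCompact_singleton isCompact_univ hopen hsub
  have h2 : ∀ᶠ a in 𝓝 a₀, ∀ p, (⨅ q, g a₀ q) - ε / 2 < g a p := by
    filter_upwards [hU.mem_nhds (haU (mem_singleton a₀))] with a ha p
    exact hUV (Set.mk_mem_prod ha (hVuniv (mem_univ p)))
  filter_upwards [h1, h2] with a ha1 ha2
  have hle : (⨅ q, g a q) ≤ g a p₀ := ciInf_le (bdd_below_range_cont (hga a)) p₀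
  have hge : (⨅ q, g a₀ q) - ε / 2 ≤ ⨅ q, g a q := le_ciInf fun p => (ha2 p).le
  rw [Real.dist_eq, abs_sub_lt_iff]
  constructor <;> linarith

private lemma continuous_iSup_compact {α : Type*} [TopologicalSpace α] {g : α → K → ℝ}
    (hg : Continuous fun z : α × K => g z.1 z.2) : Continuous fun a => ⨆ p, g a p := by
  have hga : ∀ a, Continuous (g a) := fun a => hg.comp (Continuous.prodMk_right a)
  have h := continuous_iInf_compact (g := fun a p => -(g a p)) hg.neg
  apply h.neg.congr
  intro a
  obtain ⟨p, hp⟩ := exists_forall_ge_cont (hga a)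
  show -(⨅ q, (-g a) q) = ⨆ p, g a p
  rw [iSup_eq_of_max (hga a) hp, iInf_eq_of_min (hga a).neg (fun q => neg_le_neg (hp q))]
  simp only [Pi.neg_apply, neg_neg]

private lemma tendsto_iInf_penalized {f h : K → ℝ} (hf : Continuous f) (hh : Continuous h)
    (h0 : ∀ p, 0 ≤ h p) (hne : {p | h p = 0}.Nonempty) :
    Tendsto (fun k : ℕ => ⨅ p, (f p + k * h p)) atTop (𝓝 (sInf (f '' {p | h p = 0}))) := by
  have hZcl : IsClosed {p | h p = 0} := isClosed_eq hh continuous_const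
  obtain ⟨p₀, hp₀Z, hp₀⟩ := hZcl.isCompact.exists_isMinOn hne hf.continuousOn
  have hp₀0 : h p₀ = 0 := hp₀Z
  have hc : sInf (f '' {p | h p = 0}) = f p₀ :=
    csInf_image_eq_of_min hp₀Z fun q hq => hp₀ hq
  have hcont : ∀ k : ℕ, Continuous fun p => f p + (k : ℝ) * h p := fun k =>
    hf.add (continuous_const.mul hh)
  have hVle : ∀ k : ℕ, (⨅ p, (f p + (k:ℝ) * h p)) ≤ f p₀ := fun k => by
    have := ciInf_le (bdd_below_range_cont (hcont k)) p₀
    rw [hp₀0] at this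
    simpa using this
  have hmono : Monotone fun k : ℕ => ⨅ p, (f p + (k:ℝ) * h p) := by
    intro k l hkl
    refine ciInf_mono (bdd_below_range_cont (hcont k)) fun p => ?_
    have h1 := h0 p
    have h2 : (k : ℝ) ≤ l := Nat.cast_le.mpr hkl
    nlinarith
  have hbdd : BddAbove (Set.range fun k : ℕ => ⨅ p, (f p + (k:ℝ) * h p)) :=
    ⟨f p₀, by rintro r ⟨k, rfl⟩; exact hVle k⟩
  have htend := tendsto_atTop_ciSup hmono hbdd
  have hsup_le : (⨆ k : ℕ, ⨅ p, (f p + (k:ℝ) * h p)) ≤ f p₀ := ciSup_le hVle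
  have hle_sup : f p₀ ≤ ⨆ k : ℕ, ⨅ p, (f p + (k:ℝ) * h p) := by
    have hmin : ∀ k : ℕ, ∃ p, ∀ q, f p + (k:ℝ) * h p ≤ f q + (k:ℝ) * h q := fun k =>
      exists_forall_le_cont (hcont k)
    choose p hp using hmin
    obtain ⟨q, -, φ, hφ, hqlim⟩ := isCompact_univ.tendsto_subseq fun k => mem_univ (p k)
    obtain ⟨B, hB⟩ := exists_forall_le_cont hf
    have hVk : ∀ k : ℕ, (⨅ r, (f r + (k:ℝ) * h r)) = f (p k) + (k:ℝ) * h (p k) := fun k =>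
      iInf_eq_of_min (hcont k) (hp k)
    have hfpk_le : ∀ k : ℕ, f (p k) + (k:ℝ) * h (p k) ≤ f p₀ := fun k => by
      rw [← hVk k]; exact hVle k
    have hh0 : Tendsto (fun k : ℕ => h (p k)) atTop (𝓝 0) := by
      apply squeeze_zero' (Eventually.of_forall fun k => h0 (p k)) ?_
        (tendsto_const_div_atTop_nhds_zero_nat (f p₀ - f B))
      filter_upwards [eventually_ge_atTop 1] with k hk
      have hkpos : (0:ℝ) < k := by exact_mod_cast hk
      rw [le_div_iff₀ hkpos]
      have h1 : f B ≤ f (p k) := hB (p k)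
      have h2 := hfpk_le k
      nlinarith
    have hhq : h q = 0 := by
      have l1 : Tendsto (fun n => h (p (φ n))) atTop (𝓝 (h q)) := (hh.tendsto q).comp hqlim
      have l2 : Tendsto (fun n => h (p (φ n))) atTop (𝓝 0) := hh0.comp hφ.tendsto_atTop
      exact tendsto_nhds_unique l1 l2
    have hfq : f p₀ ≤ f q := hp₀ hhq
    have l3 : Tendsto (fun n => f (p (φ n))) atTop (𝓝 (f q)) := (hf.tendsto q).comp hqlim
    have l4 : ∀ n, f (p (φ n)) ≤ ⨆ k : ℕ, ⨅ r, (f r + (k:ℝ) * h r) := fun n => by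
      have h1 : f (p (φ n)) ≤ ⨅ r, (f r + ((φ n : ℕ):ℝ) * h r) := by
        rw [hVk]
        have := h0 (p (φ n))
        have : (0:ℝ) ≤ ((φ n : ℕ):ℝ) * h (p (φ n)) := by positivity
        linarith
      exact h1.trans (le_ciSup hbdd (φ n))
    have := le_of_tendsto l3 (Eventually.of_forall l4)
    linarith
  have hfin : (⨆ k : ℕ, ⨅ p, (f p + (k:ℝ) * h p)) = sInf (f '' {p | h p = 0}) := by
    rw [hc]; exact le_antisymm hsup_le hle_sup
  rw [← hfin]
  exact htend

end AuxCompact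

section AbstractSelection

open TopologicalSpace

private theorem exists_measurable_zero_selection
    {X Y K : Type*} [MeasurableSpace X]
    [TopologicalSpace Y] [MeasurableSpace Y] [OpensMeasurableSpace Y]
    [MetricSpace K] [CompactSpace K] [Nonempty K] [TopologicalSpace.SeparableSpace K]
    [MeasurableSpace K] [BorelSpace K]
    (H : Y → K → ℝ) (hH : Continuous fun z : Y × K => H z.1 z.2)
    (hH0 : ∀ y p, 0 ≤ H y p)
    (A : X → Y) (hA : Measurable A)
    (hz : ∀ x, ∃ p, H (A x) p = 0) :
    ∃ R : X → K, Measurable R ∧ ∀ x, H (A x) (R x) = 0 := by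
  classical
  set u : ℕ → K := TopologicalSpace.denseSeq K with hu_def
  have hu : DenseRange u := TopologicalSpace.denseRange_denseSeq K
  obtain ⟨G, hG0, hGsucc⟩ : ∃ G : ℕ → X → Set K, (∀ x, G 0 x = {p | H (A x) p = 0}) ∧
      (∀ n x, G (n + 1) x =
        {p ∈ G n x | dist p (u n) = sInf ((fun q => dist q (u n)) '' G n x)}) :=
    ⟨fun n => Nat.rec (fun x => {p | H (A x) p = 0})
      (fun n Gn x => {p ∈ Gn x | dist p (u n) = sInf ((fun q => dist q (u n)) '' Gn x)}) n,
      fun _ => rfl, fun _ _ => rfl⟩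
  set c : ℕ → X → ℝ := fun n x => sInf ((fun q => dist q (u n)) '' G n x) with hc_def
  have hGsucc' : ∀ n x, G (n + 1) x = {p ∈ G n x | dist p (u n) = c n x} := hGsucc
  have hHx : ∀ x, Continuous fun p => H (A x) p := fun x => hH.comp (Continuous.prodMk_right (A x))
  have hGcl : ∀ n x, IsClosed (G n x) := by
    intro n
    induction n with
    | zero => intro x; rw [hG0 x]; exact isClosed_eq (hHx x) continuous_const
    | succ n ih =>
      intro x
      rw [hGsucc' n x]
      exact (ih x).inter (isClosed_eq (continuous_id.dist continuous_const) continuous_const)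
  have hGc : ∀ n x, IsCompact (G n x) := fun n x => (hGcl n x).isCompact
  have hGmono : ∀ n x, G (n + 1) x ⊆ G n x := fun n x => by
    rw [hGsucc' n x]; exact fun p hp => hp.1
  have hbddb : ∀ n x, BddBelow ((fun q => dist q (u n)) '' G n x) := fun n x =>
    ⟨0, by rintro r ⟨q, -, rfl⟩; exact dist_nonneg⟩
  have hc_le : ∀ n x p, p ∈ G n x → c n x ≤ dist p (u n) := fun n x p hp =>
    csInf_le (hbddb n x) (mem_image_of_mem _ hp)
  have hGne : ∀ n x, (G n x).Nonempty := by
    intro n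
    induction n with
    | zero => intro x; obtain ⟨p, hp⟩ := hz x; exact ⟨p, by rw [hG0 x]; exact hp⟩
    | succ n ih =>
      intro x
      obtain ⟨p, hpG, hpmin⟩ := (hGc n x).exists_isMinOn (ih x)
        ((continuous_id.dist continuous_const).continuousOn)
      refine ⟨p, ?_⟩
      rw [hGsucc' n x]
      exact ⟨hpG, (csInf_image_eq_of_min (f := fun q => dist q (u n)) hpG fun q hq => hpmin hq).symm⟩
  have hPen_nonneg : ∀ n x p, 0 ≤ ∑ j ∈ Finset.range n, max (dist p (u j) - c j x) 0 :=
    fun n x p => Finset.sum_nonneg fun j _ => le_max_right _ _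
  have hGeq : ∀ n x, G n x =
      {p | H (A x) p + ∑ j ∈ Finset.range n, max (dist p (u j) - c j x) 0 = 0} := by
    intro n
    induction n with
    | zero => intro x; rw [hG0 x]; simp
    | succ n ih =>
      intro x
      have hiff : ∀ p, p ∈ G n x ↔
          H (A x) p + ∑ j ∈ Finset.range n, max (dist p (u j) - c j x) 0 = 0 := fun p => by
        rw [ih x]; exact Iff.rfl
      ext p
      rw [hGsucc' n x]
      simp only [mem_setOf_eq, Set.mem_sep_iff, Finset.sum_range_succ]
      constructor
      · rintro ⟨hpG, hpd⟩
        have h1 := (hiff p).mp hpG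
        rw [hpd, sub_self, max_self]
        linarith
      · intro htot
        have h1 := hH0 (A x) p
        have h2 := hPen_nonneg n x p
        have h3 : (0:ℝ) ≤ max (dist p (u n) - c n x) 0 := le_max_right _ _
        have h4 : H (A x) p + ∑ j ∈ Finset.range n, max (dist p (u j) - c j x) 0 = 0 := by
          linarith
        have hpG : p ∈ G n x := (hiff p).mpr h4
        have h5 : max (dist p (u n) - c n x) 0 = 0 := by linarith
        have h6 : dist p (u n) - c n x ≤ 0 := by
          have := le_max_left (dist p (u n) - c n x) 0
          rw [h5] at this; exact this
        exact ⟨hpG, le_antisymm (by linarith) (hc_le n x p hpG)⟩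
  have hcm : ∀ n, Measurable (c n) := by
    intro n
    induction n using Nat.strong_induction_on with
    | _ n IH =>
      have hmeas_k : ∀ k : ℕ, Measurable fun x => ⨅ p : K,
          (dist p (u n) + (k:ℝ) * (H (A x) p +
            ∑ j ∈ Finset.range n, max (dist p (u j) - c j x) 0)) := by
        intro k
        have hWcont : Continuous fun za : Y × (Fin n → ℝ) => ⨅ p : K,
            (dist p (u n) + (k:ℝ) * (H za.1 p +
              ∑ j : Fin n, max (dist p (u (j:ℕ)) - za.2 j) 0)) := by
          apply continuous_iInf_compact
          apply Continuous.add
          · exact continuous_snd.dist continuous_const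
          · apply Continuous.mul continuous_const
            apply Continuous.add
            · exact hH.comp ((continuous_fst.comp continuous_fst).prodMk continuous_snd)
            · apply continuous_finset_sum
              intro j _
              exact ((continuous_snd.dist continuous_const).sub
                ((continuous_apply j).comp (continuous_snd.comp continuous_fst))).max
                continuous_const
        have hAc : Measurable fun x => ((A x, fun j : Fin n => c (j:ℕ) x) : Y × (Fin n → ℝ)) :=
          hA.prodMk (measurable_pi_lambda _ fun j => IH (j:ℕ) j.2)
        have hcomp := hWcont.measurable.comp hAc
        have heq : (fun x => ⨅ p : K, (dist p (u n) + (k:ℝ) * (H (A x) p +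
            ∑ j ∈ Finset.range n, max (dist p (u j) - c j x) 0))) =
            (fun za : Y × (Fin n → ℝ) => ⨅ p : K, (dist p (u n) + (k:ℝ) * (H za.1 p +
              ∑ j : Fin n, max (dist p (u (j:ℕ)) - za.2 j) 0))) ∘
            (fun x => ((A x, fun j : Fin n => c (j:ℕ) x) : Y × (Fin n → ℝ))) := by
          funext x
          simp only [Function.comp_apply]
          congr 1
          funext p
          rw [Finset.sum_range fun j => max (dist p (u j) - c j x) 0]
        rw [heq]
        exact hcomp
      apply measurable_of_tendsto_metrizable hmeas_k
      rw [tendsto_pi_nhds]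
      intro x
      have hpen := tendsto_iInf_penalized (f := fun p => dist p (u n))
        (h := fun p => H (A x) p + ∑ j ∈ Finset.range n, max (dist p (u j) - c j x) 0)
        (continuous_id.dist continuous_const)
        ((hHx x).add (continuous_finset_sum _ fun j _ =>
          ((continuous_id.dist continuous_const).sub continuous_const).max continuous_const))
        (fun p => add_nonneg (hH0 _ p) (hPen_nonneg n x p))
        (by rw [← hGeq n x]; exact hGne n x)
      have hid : sInf ((fun p => dist p (u n)) ''
          {p | H (A x) p + ∑ j ∈ Finset.range n, max (dist p (u j) - c j x) 0 = 0}) = c n x := by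
        rw [← hGeq n x]
      rw [← hid]
      exact hpen
  have hInter : ∀ x, (⋂ n, G n x).Nonempty := fun x =>
    IsCompact.nonempty_iInter_of_sequence_nonempty_isCompact_isClosed (fun n => G n x)
      (fun n => hGmono n x) (fun n => hGne n x) (hGc 0 x) (fun n => hGcl n x)
  choose R hR using hInter
  have hRG : ∀ x n, R x ∈ G n x := fun x n => Set.mem_iInter.mp (hR x) n
  have hRd : ∀ x n, dist (R x) (u n) = c n x := fun x n => by
    have := hRG x (n + 1)
    rw [hGsucc' n x] at this
    exact this.2
  refine ⟨R, ?_, fun x => by have := hRG x 0; rwa [hG0 x] at this⟩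
  apply measurable_of_isOpen
  intro s hs
  have hset : R ⁻¹' s = ⋃ (n : ℕ) (q : ℚ) (_ : Metric.closedBall (u n) (q:ℝ) ⊆ s),
      {x | c n x ≤ (q:ℝ)} := by
    ext x
    simp only [mem_preimage, Set.mem_iUnion, mem_setOf_eq]
    constructor
    · intro hx
      obtain ⟨ε, hε, hball⟩ := Metric.isOpen_iff.mp hs (R x) hx
      obtain ⟨n, hn⟩ := hu.exists_dist_lt (R x) (show (0:ℝ) < ε / 3 by linarith)
      obtain ⟨q, hq1, hq2⟩ := exists_rat_btwn (show ε / 3 < ε / 2 by linarith)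
      refine ⟨n, q, fun z hz => hball ?_, ?_⟩
      · rw [Metric.mem_ball]
        calc dist z (R x) ≤ dist z (u n) + dist (u n) (R x) := dist_triangle _ _ _
          _ ≤ (q:ℝ) + ε / 3 := add_le_add (Metric.mem_closedBall.mp hz)
              (by rw [dist_comm]; exact hn.le)
          _ < ε := by linarith
      · rw [← hRd x n]; linarith
    · rintro ⟨n, q, hsub, hle⟩
      apply hsub
      rw [Metric.mem_closedBall, hRd x n]
      exact hle
  rw [hset]
  refine MeasurableSet.iUnion fun n => MeasurableSet.iUnion fun q =>
    MeasurableSet.iUnion fun _ => measurableSet_le (hcm n) measurable_const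

end AbstractSelection
/-- under (B.1), there is a Borel measurable selection `t ↦ R_t ∈ 𝒫_{ξ_t|η_t}`
on `[0,T]`, where the space of probability measures carries the Borel σ-field of the
Lévy–Prokhorov metric. -/
theorem stmt_14 {Ω : Type*} [MeasurableSpace Ω] [MetricSpace Ω]
    [TopologicalSpace.SeparableSpace Ω] [CompleteSpace Ω] [BorelSpace Ω]
    (𝒮 : Set (ProbabilityMeasure Ω)) (h𝒮ne : 𝒮.Nonempty) (h𝒮c : IsCompact 𝒮)
    (T : ℝ) (hT : 0 < T) (ξ η : ℝ → Ω → ℝ)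
    (hξ : ∀ t ∈ Icc (0:ℝ) T, MemL1 𝒮 (ξ t)) (hη : ∀ t ∈ Icc (0:ℝ) T, MemL1 𝒮 (η t))
    (hξ2 : ∀ t ∈ Icc (0:ℝ) T, ∀ P ∈ 𝒮, Integrable (fun ω => (ξ t ω) ^ 2) (P : Measure Ω))
    (hη2 : ∀ t ∈ Icc (0:ℝ) T, ∀ P ∈ 𝒮, Integrable (fun ω => (η t ω) ^ 2) (P : Measure Ω))
    (C : ℝ) (hC : 0 ≤ C)
    (hB1 : ∀ s ∈ Icc (0:ℝ) T, ∀ t ∈ Icc (0:ℝ) T, ∀ P ∈ 𝒮,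
      ∫ ω, (|ξ t ω - ξ s ω| ^ 2 + |η t ω - η s ω| ^ 2) ∂(P : Measure Ω) ≤ C * |t - s|) :
    ∃ R : Icc (0:ℝ) T → ProbabilityMeasure Ω,
      (@Measurable _ _ _ (borel (LevyProkhorov (ProbabilityMeasure Ω)))
        (fun t => (LevyProkhorov.toMeasureEquiv (α := ProbabilityMeasure Ω)).symm (R t))) ∧
      (∀ t : Icc (0:ℝ) T, R t ∈ 𝒮) ∧
      (∀ t : Icc (0:ℝ) T, R t ∈ condMaximizers 𝒮 (ξ (t : ℝ)) (η (t : ℝ))) := by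
  classical
  letI : MeasurableSpace (LevyProkhorov (ProbabilityMeasure Ω)) :=
    borel (LevyProkhorov (ProbabilityMeasure Ω))
  haveI : BorelSpace (LevyProkhorov (ProbabilityMeasure Ω)) := ⟨rfl⟩
  set e : ProbabilityMeasure Ω ≃ₜ LevyProkhorov (ProbabilityMeasure Ω) :=
    LevyProkhorov.probabilityMeasureHomeomorph (Ω := Ω) with he_def
  set S' : Set (LevyProkhorov (ProbabilityMeasure Ω)) := e '' 𝒮 with hS'def
  have hS'c : IsCompact S' := h𝒮c.image e.continuous
  haveI : CompactSpace S' := isCompact_iff_compactSpace.mp hS'c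
  haveI : Nonempty S' := (h𝒮ne.image e).to_subtype
  haveI : TopologicalSpace.SeparableSpace S' := hS'c.isSeparable.separableSpace
  have hμS : ∀ P : S', e.symm (P : LevyProkhorov (ProbabilityMeasure Ω)) ∈ 𝒮 := by
    rintro ⟨Q, hQ⟩
    obtain ⟨P, hP, rfl⟩ := hQ
    simpa using hP
  -- Step 1: square integrability of increments
  have hsqint : ∀ (ζ : ℝ → Ω → ℝ), (∀ t ∈ Icc (0:ℝ) T, MemL1 𝒮 (ζ t)) →
      (∀ t ∈ Icc (0:ℝ) T, ∀ P ∈ 𝒮, Integrable (fun ω => (ζ t ω) ^ 2) (P : Measure Ω)) →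
      ∀ s ∈ Icc (0:ℝ) T, ∀ t ∈ Icc (0:ℝ) T, ∀ P ∈ 𝒮,
        Integrable (fun ω => (ζ t ω - ζ s ω) ^ 2) (P : Measure Ω) := by
    intro ζ h1 h2 s hs t ht P hP
    have hm : Measurable fun ω => (ζ t ω - ζ s ω) ^ 2 :=
      ((h1 t ht).1.sub (h1 s hs).1).pow_const 2
    apply Integrable.mono' (((h2 t ht P hP).const_mul 2).add ((h2 s hs P hP).const_mul 2))
      hm.aestronglyMeasurable
    filter_upwards with ω
    simp only [Pi.add_apply]
    rw [Real.norm_eq_abs, abs_of_nonneg (sq_nonneg _)]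
    nlinarith [sq_nonneg (ζ t ω + ζ s ω)]
  -- Step 2: L² bound on increments for ξ and η separately
  have hsqb : ∀ s ∈ Icc (0:ℝ) T, ∀ t ∈ Icc (0:ℝ) T, ∀ P ∈ 𝒮,
      (∫ ω, (ξ t ω - ξ s ω) ^ 2 ∂(P : Measure Ω) ≤ C * |t - s|) ∧
      (∫ ω, (η t ω - η s ω) ^ 2 ∂(P : Measure Ω) ≤ C * |t - s|) := by
    intro s hs t ht P hP
    have hIξ := hsqint ξ hξ hξ2 s hs t ht P hP
    have hIη := hsqint η hη hη2 s hs t ht P hP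
    have hB := hB1 s hs t ht P hP
    rw [show (fun ω => |ξ t ω - ξ s ω| ^ 2 + |η t ω - η s ω| ^ 2) =
        (fun ω => (ξ t ω - ξ s ω) ^ 2 + (η t ω - η s ω) ^ 2) by
      funext ω; rw [sq_abs, sq_abs]] at hB
    constructor
    · refine le_trans ?_ hB
      exact integral_mono hIξ (hIξ.add hIη) fun ω => le_add_of_nonneg_right (sq_nonneg _)
    · refine le_trans ?_ hB
      exact integral_mono hIη (hIξ.add hIη) fun ω => le_add_of_nonneg_left (sq_nonneg _)
  -- Step 3: L¹ modulus of continuity in time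
  have hmodgen : ∀ (ζ : ℝ → Ω → ℝ), (∀ t ∈ Icc (0:ℝ) T, MemL1 𝒮 (ζ t)) →
      (∀ s ∈ Icc (0:ℝ) T, ∀ t ∈ Icc (0:ℝ) T, ∀ P ∈ 𝒮,
        Integrable (fun ω => (ζ t ω - ζ s ω) ^ 2) (P : Measure Ω)) →
      (∀ s ∈ Icc (0:ℝ) T, ∀ t ∈ Icc (0:ℝ) T, ∀ P ∈ 𝒮,
        ∫ ω, (ζ t ω - ζ s ω) ^ 2 ∂(P : Measure Ω) ≤ C * |t - s|) →
      ∀ ε : ℝ, 0 < ε → ∀ s ∈ Icc (0:ℝ) T, ∀ t ∈ Icc (0:ℝ) T, ∀ P ∈ 𝒮,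
        ∫ ω, |ζ t ω - ζ s ω| ∂(P : Measure Ω) ≤ ε / 2 + C * |t - s| / (2 * ε) := by
    intro ζ h1 hint hbd ε hε s hs t ht P hP
    have hf : Integrable (fun ω => ζ t ω - ζ s ω) (P : Measure Ω) :=
      ((h1 t ht).2.1 P hP).sub ((h1 s hs).2.1 P hP)
    have hI2 := hint s hs t ht P hP
    have h2 : ∫ ω, |ζ t ω - ζ s ω| ∂(P : Measure Ω) ≤
        ∫ ω, (ε / 2 + (ζ t ω - ζ s ω) ^ 2 / (2 * ε)) ∂(P : Measure Ω) := by
      refine integral_mono hf.abs ((integrable_const _).add (hI2.div_const _)) fun ω => ?_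
      have h3 : (0:ℝ) ≤ (|ζ t ω - ζ s ω| - ε) ^ 2 := sq_nonneg _
      have h4 : |ζ t ω - ζ s ω| ^ 2 = (ζ t ω - ζ s ω) ^ 2 := sq_abs _
      rw [show ε / 2 + (ζ t ω - ζ s ω) ^ 2 / (2 * ε) =
        (ε ^ 2 + (ζ t ω - ζ s ω) ^ 2) / (2 * ε) by field_simp]
      rw [le_div_iff₀ (by positivity)]
      nlinarith [h3, h4]
    rw [integral_add (integrable_const _) (hI2.div_const _), integral_const, integral_div] at h2
    simp only [probReal_univ, ENNReal.toReal_one, smul_eq_mul, one_mul] at h2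
    refine h2.trans ?_
    have h6 := hbd s hs t ht P hP
    have h7 : (∫ ω, (ζ t ω - ζ s ω) ^ 2 ∂(P : Measure Ω)) / (2 * ε) ≤ C * |t - s| / (2 * ε) := by
      gcongr
    linarith
  -- Step 4: joint continuity of the integral functionals
  have hkey : ∀ (ζ : ℝ → Ω → ℝ), (∀ t ∈ Icc (0:ℝ) T, MemL1 𝒮 (ζ t)) →
      (∀ ε : ℝ, 0 < ε → ∀ s ∈ Icc (0:ℝ) T, ∀ t ∈ Icc (0:ℝ) T, ∀ P ∈ 𝒮,
        ∫ ω, |ζ t ω - ζ s ω| ∂(P : Measure Ω) ≤ ε / 2 + C * |t - s| / (2 * ε)) →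
      Continuous fun z : ↥(Icc (0:ℝ) T) × ↥S' =>
        ∫ ω, ζ (↑z.1) ω ∂((e.symm ↑z.2 : ProbabilityMeasure Ω) : Measure Ω) := by
    intro ζ h1 hmod
    have hint : ∀ (t : ℝ), t ∈ Icc (0:ℝ) T → ∀ P : S',
        Integrable (ζ t) ((e.symm ↑P : ProbabilityMeasure Ω) : Measure Ω) :=
      fun t ht P => (h1 t ht).2.1 _ (hμS P)
    have contP : ∀ t : ↥(Icc (0:ℝ) T), Continuous fun P : S' =>
        ∫ ω, ζ (↑t) ω ∂((e.symm ↑P : ProbabilityMeasure Ω) : Measure Ω) := by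
      intro t
      have happrox : ∀ n : ℕ, ∃ θ : BoundedContinuousFunction Ω ℝ, ∀ P ∈ 𝒮,
          ∫ ω, |ζ (↑t) ω - θ ω| ∂(P : Measure Ω) ≤ 1 / (n + 1) :=
        fun n => (h1 (↑t) t.2).2.2 (1 / (n + 1)) (by positivity)
      choose θ hθ using happrox
      have hcont_n : ∀ n : ℕ, Continuous fun P : S' =>
          ∫ ω, (θ n) ω ∂((e.symm ↑P : ProbabilityMeasure Ω) : Measure Ω) := fun n =>
        (MeasureTheory.ProbabilityMeasure.continuous_integral_boundedContinuousFunction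
          (θ n)).comp (e.symm.continuous.comp continuous_subtype_val)
      refine TendstoUniformly.continuous (F := fun (n : ℕ) (P : S') =>
        ∫ ω, (θ n) ω ∂((e.symm ↑P : ProbabilityMeasure Ω) : Measure Ω)) (p := atTop)
        ?_ (Eventually.of_forall hcont_n).frequently
      rw [Metric.tendstoUniformly_iff]
      intro ε hε
      obtain ⟨N, hN⟩ := exists_nat_one_div_lt hε
      filter_upwards [eventually_ge_atTop N] with n hn P
      have hi1 := hint (↑t) t.2 P
      have hi2 : Integrable (⇑(θ n)) ((e.symm ↑P : ProbabilityMeasure Ω) : Measure Ω) :=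
        (θ n).integrable _
      rw [Real.dist_eq, ← integral_sub hi1 hi2]
      calc |∫ ω, (ζ (↑t) ω - (θ n) ω) ∂((e.symm ↑P : ProbabilityMeasure Ω) : Measure Ω)|
          ≤ ∫ ω, |ζ (↑t) ω - (θ n) ω| ∂((e.symm ↑P : ProbabilityMeasure Ω) : Measure Ω) := by
            simpa [Real.norm_eq_abs] using norm_integral_le_integral_norm
              (μ := ((e.symm ↑P : ProbabilityMeasure Ω) : Measure Ω))
              (fun ω => ζ (↑t) ω - (θ n) ω)
        _ ≤ 1 / (n + 1) := hθ n _ (hμS P)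
        _ ≤ 1 / (N + 1) := by
            apply one_div_le_one_div_of_le (by positivity)
            have : (N : ℝ) ≤ n := Nat.cast_le.mpr hn
            linarith
        _ < ε := hN
    have hmod' : ∀ ε : ℝ, 0 < ε → ∃ δ : ℝ, 0 < δ ∧ ∀ (a b : ↥(Icc (0:ℝ) T)) (P : S'),
        dist a b ≤ δ →
        |(∫ ω, ζ (↑a) ω ∂((e.symm ↑P : ProbabilityMeasure Ω) : Measure Ω)) -
          ∫ ω, ζ (↑b) ω ∂((e.symm ↑P : ProbabilityMeasure Ω) : Measure Ω)| ≤ ε := by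
      intro ε hε
      refine ⟨ε ^ 2 / (C + 1), by positivity, fun a b P hab => ?_⟩
      have hi1 := hint (↑a) a.2 P
      have hi2 := hint (↑b) b.2 P
      have hd : dist a b = |(↑a : ℝ) - ↑b| := by
        rw [Subtype.dist_eq, Real.dist_eq]
      have h8 := hmod ε hε (↑b) b.2 (↑a) a.2 _ (hμS P)
      have h9 : C * |(↑a : ℝ) - ↑b| ≤ ε ^ 2 := by
        calc C * |(↑a : ℝ) - ↑b| ≤ (C + 1) * |(↑a : ℝ) - ↑b| := by
              apply mul_le_mul_of_nonneg_right (by linarith) (abs_nonneg _)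
          _ ≤ (C + 1) * (ε ^ 2 / (C + 1)) := by
              apply mul_le_mul_of_nonneg_left ?_ (by linarith)
              rw [← hd]; exact hab
          _ = ε ^ 2 := by field_simp
      rw [← integral_sub hi1 hi2]
      calc |∫ ω, (ζ (↑a) ω - ζ (↑b) ω) ∂((e.symm ↑P : ProbabilityMeasure Ω) : Measure Ω)|
          ≤ ∫ ω, |ζ (↑a) ω - ζ (↑b) ω| ∂((e.symm ↑P : ProbabilityMeasure Ω) : Measure Ω) := by
            simpa [Real.norm_eq_abs] using norm_integral_le_integral_norm
              (μ := ((e.symm ↑P : ProbabilityMeasure Ω) : Measure Ω))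
              (fun ω => ζ (↑a) ω - ζ (↑b) ω)
        _ ≤ ε / 2 + C * |(↑a : ℝ) - ↑b| / (2 * ε) := h8
        _ ≤ ε / 2 + ε ^ 2 / (2 * ε) := by gcongr
        _ = ε := by field_simp; ring
    rw [continuous_iff_continuousAt]
    rintro ⟨t₀, P₀⟩
    rw [ContinuousAt, Metric.tendsto_nhds]
    intro ε hε
    obtain ⟨δ, hδ, hδ'⟩ := hmod' (ε / 3) (by linarith)
    have h1ev : ∀ᶠ z : ↥(Icc (0:ℝ) T) × ↥S' in 𝓝 (t₀, P₀), dist z.1 t₀ ≤ δ :=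
      (continuous_fst.tendsto (t₀, P₀)) (Metric.closedBall_mem_nhds t₀ hδ)
    have h2ev : ∀ᶠ z : ↥(Icc (0:ℝ) T) × ↥S' in 𝓝 (t₀, P₀),
        dist (∫ ω, ζ (↑t₀) ω ∂((e.symm ↑z.2 : ProbabilityMeasure Ω) : Measure Ω))
          (∫ ω, ζ (↑t₀) ω ∂((e.symm ↑P₀ : ProbabilityMeasure Ω) : Measure Ω)) < ε / 3 :=
      (((contP t₀).comp continuous_snd).tendsto (t₀, P₀))
        (Metric.ball_mem_nhds _ (by linarith))
    filter_upwards [h1ev, h2ev] with z hz1 hz2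
    rw [Real.dist_eq] at hz2 ⊢
    have ha := hδ' z.1 t₀ z.2 hz1
    calc |(∫ ω, ζ (↑z.1) ω ∂((e.symm ↑z.2 : ProbabilityMeasure Ω) : Measure Ω)) -
          ∫ ω, ζ (↑t₀) ω ∂((e.symm ↑P₀ : ProbabilityMeasure Ω) : Measure Ω)|
        ≤ |(∫ ω, ζ (↑z.1) ω ∂((e.symm ↑z.2 : ProbabilityMeasure Ω) : Measure Ω)) -
            ∫ ω, ζ (↑t₀) ω ∂((e.symm ↑z.2 : ProbabilityMeasure Ω) : Measure Ω)| +
          |(∫ ω, ζ (↑t₀) ω ∂((e.symm ↑z.2 : ProbabilityMeasure Ω) : Measure Ω)) -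
            ∫ ω, ζ (↑t₀) ω ∂((e.symm ↑P₀ : ProbabilityMeasure Ω) : Measure Ω)| :=
        abs_sub_le _ _ _
      _ < ε := by linarith
  have contΦ := hkey ξ hξ (hmodgen ξ hξ (hsqint ξ hξ hξ2)
    (fun s hs t ht P hP => (hsqb s hs t ht P hP).1))
  have contΨ := hkey η hη (hmodgen η hη (hsqint η hη hη2)
    (fun s hs t ht P hP => (hsqb s hs t ht P hP).2))
  -- abbreviations
  set Φ : ↥(Icc (0:ℝ) T) → ↥S' → ℝ := fun t P =>
    ∫ ω, ξ (↑t) ω ∂((e.symm ↑P : ProbabilityMeasure Ω) : Measure Ω) with hΦdef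
  set Ψ : ↥(Icc (0:ℝ) T) → ↥S' → ℝ := fun t P =>
    ∫ ω, η (↑t) ω ∂((e.symm ↑P : ProbabilityMeasure Ω) : Measure Ω) with hΨdef
  have contΦ' : Continuous fun z : ↥(Icc (0:ℝ) T) × ↥S' => Φ z.1 z.2 := contΦ
  have contΨ' : Continuous fun z : ↥(Icc (0:ℝ) T) × ↥S' => Ψ z.1 z.2 := contΨ
  have contΦt : ∀ t, Continuous (Φ t) := fun t => contΦ'.comp (Continuous.prodMk_right t)
  have contΨt : ∀ t, Continuous (Ψ t) := fun t => contΨ'.comp (Continuous.prodMk_right t)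
  set Esup : ↥(Icc (0:ℝ) T) → ℝ := fun t => ⨆ P : S', Φ t P with hEsupdef
  have hEcont : Continuous Esup := continuous_iSup_compact contΦ'
  have hΦle : ∀ t P, Φ t P ≤ Esup t := fun t P =>
    le_ciSup (bdd_above_range_cont (contΦt t)) P
  -- bridging the suprema
  have hrange : ∀ g : ProbabilityMeasure Ω → ℝ,
      (Set.range fun P : ↥𝒮 => g ↑P) = Set.range fun P : S' => g (e.symm ↑P) := by
    intro g
    ext r
    constructor
    · rintro ⟨⟨P, hP⟩, rfl⟩
      exact ⟨⟨e P, mem_image_of_mem _ hP⟩, by simp⟩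
    · rintro ⟨P, rfl⟩
      exact ⟨⟨e.symm ↑P, hμS P⟩, rfl⟩
  have hEs : ∀ t : ↥(Icc (0:ℝ) T), sublinE 𝒮 (ξ ↑t) = Esup t := by
    intro t
    show (⨆ P : ↥𝒮, ∫ ω, ξ (↑t) ω ∂((P : ProbabilityMeasure Ω) : Measure Ω)) = ⨆ P : S', Φ t P
    rw [iSup, iSup, hrange (fun Q : ProbabilityMeasure Ω => ∫ ω, ξ (↑t) ω ∂(Q : Measure Ω))]
  -- the maximizer set inside S'
  have hZne : ∀ t : ↥(Icc (0:ℝ) T), {P : S' | Esup t - Φ t P = 0}.Nonempty := by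
    intro t
    obtain ⟨P, hP⟩ := exists_forall_ge_cont (contΦt t)
    refine ⟨P, ?_⟩
    have h : Esup t = Φ t P := iSup_eq_of_max (contΦt t) hP
    rw [mem_setOf_eq, h, sub_self]
  have hZc : ∀ t : ↥(Icc (0:ℝ) T), IsCompact {P : S' | Esup t - Φ t P = 0} := fun t =>
    (isClosed_eq (continuous_const.sub (contΦt t)) continuous_const).isCompact
  -- the conditional maximizer and its value
  have hstar : ∀ t : ↥(Icc (0:ℝ) T), ∃ P : S', (Esup t - Φ t P = 0) ∧
      ∀ Q : S', Esup t - Φ t Q = 0 → Ψ t Q ≤ Ψ t P := by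
    intro t
    obtain ⟨P, hPZ, hPmax⟩ := (hZc t).exists_isMaxOn (hZne t) (contΨt t).continuousOn
    exact ⟨P, hPZ, fun Q hQ => hPmax hQ⟩
  choose Pstar hPstarZ hPstarMax using hstar
  -- bridging the conditional expectation
  have hmaxim : ∀ t : ↥(Icc (0:ℝ) T),
      (fun Q : ProbabilityMeasure Ω => ∫ ω, η (↑t) ω ∂(Q : Measure Ω)) ''
        (maximizers 𝒮 (ξ ↑t)) = Ψ t '' {P : S' | Esup t - Φ t P = 0} := by
    intro t
    ext r
    constructor
    · rintro ⟨Q, ⟨hQS, hQeq⟩, rfl⟩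
      refine ⟨⟨e Q, mem_image_of_mem _ hQS⟩, ?_, by simp [hΨdef]⟩
      rw [mem_setOf_eq, sub_eq_zero, ← hEs t]
      have : Φ t ⟨e Q, mem_image_of_mem _ hQS⟩ =
          ∫ ω, ξ (↑t) ω ∂(Q : Measure Ω) := by
        simp only [hΦdef, Homeomorph.symm_apply_apply]
      rw [this]
      exact hQeq.symm
    · rintro ⟨P, hP, rfl⟩
      rw [mem_setOf_eq, sub_eq_zero] at hP
      refine ⟨e.symm ↑P, ⟨hμS P, ?_⟩, rfl⟩
      rw [hEs t]
      exact hP.symm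
  have hEcEq : ∀ t : ↥(Icc (0:ℝ) T),
      sublinECond 𝒮 (ξ ↑t) (η ↑t) = Ψ t (Pstar t) := by
    intro t
    show (⨆ P : ↥(maximizers 𝒮 (ξ ↑t)),
      ∫ ω, η (↑t) ω ∂((P : ProbabilityMeasure Ω) : Measure Ω)) = Ψ t (Pstar t)
    rw [iSup, ← image_eq_range (fun Q : ProbabilityMeasure Ω =>
      ∫ ω, η (↑t) ω ∂(Q : Measure Ω)) (maximizers 𝒮 (ξ ↑t)), hmaxim t]
    exact csSup_image_eq_of_max (hPstarZ t) (hPstarMax t)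
  set Ec : ↥(Icc (0:ℝ) T) → ℝ := fun t => sublinECond 𝒮 (ξ ↑t) (η ↑t) with hEcdef
  -- measurability of Ec via penalization
  have hEcm : Measurable Ec := by
    apply measurable_of_tendsto_metrizable
      (f := fun (k : ℕ) (t : ↥(Icc (0:ℝ) T)) =>
        -(⨅ P : S', (-(Ψ t P) + (k:ℝ) * (Esup t - Φ t P))))
    · intro k
      apply Continuous.measurable
      apply Continuous.neg
      apply continuous_iInf_compact
      exact (contΨ'.neg).add (continuous_const.mul
        ((hEcont.comp continuous_fst).sub contΦ'))
    · rw [tendsto_pi_nhds]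
      intro t
      have hpen := tendsto_iInf_penalized (f := fun P : S' => -(Ψ t P))
        (h := fun P : S' => Esup t - Φ t P)
        (contΨt t).neg (continuous_const.sub (contΦt t))
        (fun P => sub_nonneg.mpr (hΦle t P)) (hZne t)
      have hid : sInf ((fun P : S' => -(Ψ t P)) '' {P : S' | Esup t - Φ t P = 0}) =
          -(Ψ t (Pstar t)) :=
        csInf_image_eq_of_min (hPstarZ t) fun q hq => neg_le_neg (hPstarMax t q hq)
      have htd := hpen.neg
      rw [hid, neg_neg] at htd
      have h2 : Ec t = Ψ t (Pstar t) := hEcEq t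
      rw [h2]
      exact htd
  -- apply the abstract selection theorem
  have hHcont : Continuous fun z : (↥(Icc (0:ℝ) T) × ℝ) × ↥S' =>
      (Esup z.1.1 - Φ z.1.1 z.2) + |z.1.2 - Ψ z.1.1 z.2| := by
    have c1 : Continuous fun z : (↥(Icc (0:ℝ) T) × ℝ) × ↥S' => (z.1.1, z.2) :=
      (continuous_fst.comp continuous_fst).prodMk continuous_snd
    exact ((hEcont.comp (continuous_fst.comp continuous_fst)).sub (contΦ'.comp c1)).add
      (((continuous_snd.comp continuous_fst).sub (contΨ'.comp c1)).abs)
  obtain ⟨R', hR'meas, hR'zero⟩ := exists_measurable_zero_selection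
    (X := ↥(Icc (0:ℝ) T)) (K := ↥S')
    (fun (y : ↥(Icc (0:ℝ) T) × ℝ) (P : ↥S') => (Esup y.1 - Φ y.1 P) + |y.2 - Ψ y.1 P|)
    hHcont
    (fun y P => add_nonneg (sub_nonneg.mpr (hΦle _ _)) (abs_nonneg _))
    (fun t => (t, Ec t)) (measurable_id.prodMk hEcm)
    (fun t => ⟨Pstar t, by
      show (Esup t - Φ t (Pstar t)) + |Ec t - Ψ t (Pstar t)| = 0
      have h2 : Ec t = Ψ t (Pstar t) := hEcEq t
      rw [hPstarZ t, h2, sub_self, abs_zero, add_zero]⟩)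
  refine ⟨fun t => e.symm ↑(R' t), ?_, fun t => hμS (R' t), fun t => ?_⟩
  · exact measurable_subtype_coe.comp hR'meas
  · have h0 := hR'zero t
    have h1 : 0 ≤ Esup t - Φ t (R' t) := sub_nonneg.mpr (hΦle t (R' t))
    have h2 : 0 ≤ |Ec t - Ψ t (R' t)| := abs_nonneg _
    have hAeq : Φ t (R' t) = Esup t := by
      have : Esup t - Φ t (R' t) = 0 := by linarith
      linarith
    have hBeq : Ψ t (R' t) = Ec t := by
      have habs : |Ec t - Ψ t (R' t)| = 0 := by linarith
      have := abs_eq_zero.mp habs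
      linarith
    refine ⟨⟨hμS (R' t), ?_⟩, ?_⟩
    · rw [hEs t]
      exact hAeq
    · exact hBeq
end
end

section
/- Under assumption (B.1), the function F : [0,T] × 𝒫 → ℝ defined by F(t, Q) := inf{d_LP(Q, R) : R ∈ 𝒫_{ξ_t|η_t}} is Borel measurable, where 𝒫 carries the topology (and Borel σ-field) of the Lévy–Prokhorov metric and [0,T] × 𝒫 the product Borel σ-field. -/
open MeasureTheory Filter Topology Set
open scoped ProbabilityTheory

noncomputable section

variable {Ω : Type*} [MeasurableSpace Ω] [TopologicalSpace Ω]

/-! ### Auxiliary lemmas -/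

section Aux

/-- Cauchy–Schwarz-type bound. -/
lemma SXV.int_abs_le_sqrt {μ : Measure Ω} [IsProbabilityMeasure μ] {f : Ω → ℝ}
    (hm : AEStronglyMeasurable f μ) (h2 : Integrable (fun ω => f ω ^ 2) μ) {B : ℝ}
    (hB : ∫ ω, f ω ^ 2 ∂μ ≤ B) : ∫ ω, |f ω| ∂μ ≤ Real.sqrt B := by
  have hX : MemLp (fun ω => |f ω|) 2 μ := by
    refine (memLp_two_iff_integrable_sq
      (hm.norm.congr (Eventually.of_forall fun ω => (Real.norm_eq_abs _)))).2 ?_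
    simpa [sq_abs] using h2
  have hvar := ProbabilityTheory.variance_nonneg (fun ω => |f ω|) μ
  rw [ProbabilityTheory.variance_eq_sub hX] at hvar
  have h1 : (∫ ω, |f ω| ∂μ) ^ 2 ≤ ∫ ω, f ω ^ 2 ∂μ := by
    have heq : (μ[(fun ω => |f ω|) ^ 2]) = ∫ ω, f ω ^ 2 ∂μ := by
      congr 1; funext ω; simp [sq_abs]
    rw [heq] at hvar; linarith
  have h0 : 0 ≤ ∫ ω, |f ω| ∂μ := integral_nonneg fun ω => abs_nonneg _
  calc ∫ ω, |f ω| ∂μ = Real.sqrt ((∫ ω, |f ω| ∂μ) ^ 2) := (Real.sqrt_sq h0).symm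
    _ ≤ Real.sqrt B := Real.sqrt_le_sqrt (h1.trans hB)

variable [OpensMeasurableSpace Ω]

/-- Continuity of `P ↦ ∫ ξ dP` on `𝒮` for `ξ ∈ L¹(𝒮)`. -/
lemma SXV.contOn_int {𝒮 : Set (ProbabilityMeasure Ω)} {ξ : Ω → ℝ} (h : MemL1 𝒮 ξ) :
    ContinuousOn (fun P : ProbabilityMeasure Ω => ∫ ω, ξ ω ∂(P : Measure Ω)) 𝒮 := by
  obtain ⟨hmeas, hint, happ⟩ := h
  choose θ hθ using fun n : ℕ => happ (1 / (n + 1)) (by positivity)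
  have key : TendstoUniformlyOn
      (fun (n : ℕ) (P : ProbabilityMeasure Ω) => ∫ ω, θ n ω ∂(P : Measure Ω))
      (fun P : ProbabilityMeasure Ω => ∫ ω, ξ ω ∂(P : Measure Ω)) atTop 𝒮 := by
    rw [Metric.tendstoUniformlyOn_iff]
    intro ε hε
    obtain ⟨n₀, hn₀⟩ := exists_nat_one_div_lt hε
    filter_upwards [eventually_ge_atTop n₀] with n hn P hP
    have hsub : ∫ ω, ξ ω ∂(P : Measure Ω) - ∫ ω, θ n ω ∂(P : Measure Ω)
        = ∫ ω, (ξ ω - θ n ω) ∂(P : Measure Ω) :=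
      (integral_sub (hint P hP) ((θ n).integrable _)).symm
    have habs : |∫ ω, (ξ ω - θ n ω) ∂(P : Measure Ω)| ≤ ∫ ω, |ξ ω - θ n ω| ∂(P : Measure Ω) := by
      simpa [Real.norm_eq_abs] using
        norm_integral_le_integral_norm (μ := (P : Measure Ω)) (fun ω => ξ ω - θ n ω)
    have hle : (1 : ℝ) / (n + 1) ≤ 1 / (n₀ + 1) := by
      apply one_div_le_one_div_of_le (by positivity)
      exact_mod_cast add_le_add_left (Nat.cast_le.mpr hn) 1
    rw [Real.dist_eq, hsub]
    exact lt_of_le_of_lt (habs.trans ((hθ n P hP).trans hle)) hn₀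
  refine key.continuousOn (Frequently.of_forall fun n => ?_)
  exact (ProbabilityMeasure.continuous_integral_boundedContinuousFunction (θ n)).continuousOn

/-- Max of a continuous function on a nonempty compact set realizes the subtype `iSup`. -/
lemma SXV.exists_max {X : Type*} [TopologicalSpace X] {K : Set X} (hK : IsCompact K)
    (hne : K.Nonempty) {f : X → ℝ} (hf : ContinuousOn f K) :
    ∃ x₀ ∈ K, f x₀ = (⨆ x : K, f x) ∧ ∀ x ∈ K, f x ≤ ⨆ x : K, f x := by
  obtain ⟨x₀, hx₀K, hx₀⟩ := hK.exists_isMaxOn hne hf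
  have hbdd : BddAbove (range fun x : K => f x) := by
    refine ⟨f x₀, ?_⟩
    rintro y ⟨⟨x, hx⟩, rfl⟩
    exact hx₀ hx
  have hne' : Nonempty K := hne.to_subtype
  have hle : ∀ x ∈ K, f x ≤ ⨆ x : K, f x := fun x hx => le_ciSup hbdd ⟨x, hx⟩
  refine ⟨x₀, hx₀K, le_antisymm (hle x₀ hx₀K) (ciSup_le fun ⟨x, hx⟩ => hx₀ hx), hle⟩

/-- A level set of a function continuous on a compact set is compact. -/
lemma SXV.isCompact_level {X : Type*} [TopologicalSpace X] {K : Set X} (hK : IsCompact K)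
    {f : X → ℝ} (hf : ContinuousOn f K) (c : ℝ) : IsCompact {x ∈ K | f x = c} := by
  have himg : {x ∈ K | f x = c} = Subtype.val '' {p : K | f ↑p = c} := by
    ext x
    constructor
    · rintro ⟨hxK, hxc⟩; exact ⟨⟨x, hxK⟩, hxc, rfl⟩
    · rintro ⟨⟨y, hyK⟩, hyc, rfl⟩; exact ⟨hyK, hyc⟩
  rw [himg]
  haveI : CompactSpace K := isCompact_iff_compactSpace.mp hK
  have hcl : IsClosed {p : K | f ↑p = c} :=
    isClosed_eq (continuousOn_iff_continuous_restrict.mp hf) continuous_const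
  exact (hcl.isCompact).image continuous_subtype_val

/-- Continuity from a square-root modulus of continuity. -/
lemma SXV.contOn_of_sqrt_mod {h : ℝ → ℝ} {C T : ℝ}
    (hmod : ∀ s ∈ Icc (0:ℝ) T, ∀ t ∈ Icc (0:ℝ) T, |h t - h s| ≤ Real.sqrt (C * |t - s|)) :
    ContinuousOn h (Icc (0:ℝ) T) := by
  intro s hs
  have hsq : Continuous fun t : ℝ => Real.sqrt (C * |t - s|) :=
    Real.continuous_sqrt.comp (continuous_const.mul ((continuous_id.sub continuous_const).abs))
  have hlim : Tendsto (fun t : ℝ => Real.sqrt (C * |t - s|)) (𝓝[Icc (0:ℝ) T] s) (𝓝 0) := by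
    have := (hsq.tendsto s).mono_left (nhdsWithin_le_nhds (s := Icc (0:ℝ) T))
    simpa using this
  rw [ContinuousWithinAt, tendsto_iff_dist_tendsto_zero]
  refine squeeze_zero' (Eventually.of_forall fun t => dist_nonneg) ?_ hlim
  filter_upwards [self_mem_nhdsWithin] with t ht
  rw [Real.dist_eq]
  exact hmod s hs t ht

end Aux

section Aux2
set_option linter.unusedSectionVars false
variable [OpensMeasurableSpace Ω]

/-- `L¹` modulus of continuity in time from (B.1). -/
lemma SXV.l1_mod {𝒮 : Set (ProbabilityMeasure Ω)} {T C : ℝ} {ξ η : ℝ → Ω → ℝ}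
    (hξ : ∀ t ∈ Icc (0:ℝ) T, MemL1 𝒮 (ξ t)) (hη : ∀ t ∈ Icc (0:ℝ) T, MemL1 𝒮 (η t))
    (hξ2 : ∀ t ∈ Icc (0:ℝ) T, ∀ P ∈ 𝒮, Integrable (fun ω => (ξ t ω) ^ 2) (P : Measure Ω))
    (hη2 : ∀ t ∈ Icc (0:ℝ) T, ∀ P ∈ 𝒮, Integrable (fun ω => (η t ω) ^ 2) (P : Measure Ω))
    (hB1 : ∀ s ∈ Icc (0:ℝ) T, ∀ t ∈ Icc (0:ℝ) T, ∀ P ∈ 𝒮,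
      ∫ ω, (|ξ t ω - ξ s ω| ^ 2 + |η t ω - η s ω| ^ 2) ∂(P : Measure Ω) ≤ C * |t - s|) :
    ∀ s ∈ Icc (0:ℝ) T, ∀ t ∈ Icc (0:ℝ) T, ∀ P ∈ 𝒮,
      ∫ ω, |ξ t ω - ξ s ω| ∂(P : Measure Ω) ≤ Real.sqrt (C * |t - s|) := by
  intro s hs t ht P hP
  have hmf : Measurable (fun ω => ξ t ω - ξ s ω) := (hξ t ht).1.sub (hξ s hs).1
  have hmg : Measurable (fun ω => η t ω - η s ω) := (hη t ht).1.sub (hη s hs).1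
  have hint2f : Integrable (fun ω => (ξ t ω - ξ s ω) ^ 2) (P : Measure Ω) := by
    refine Integrable.mono' (((hξ2 t ht P hP).const_mul 2).add ((hξ2 s hs P hP).const_mul 2))
      ((hmf.pow_const 2).aestronglyMeasurable) (Eventually.of_forall fun ω => ?_)
    rw [Real.norm_eq_abs, abs_of_nonneg (sq_nonneg _)]
    simp only [Pi.add_apply]
    nlinarith [sq_nonneg (ξ t ω + ξ s ω)]
  have hint2g : Integrable (fun ω => (η t ω - η s ω) ^ 2) (P : Measure Ω) := by
    refine Integrable.mono' (((hη2 t ht P hP).const_mul 2).add ((hη2 s hs P hP).const_mul 2))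
      ((hmg.pow_const 2).aestronglyMeasurable) (Eventually.of_forall fun ω => ?_)
    rw [Real.norm_eq_abs, abs_of_nonneg (sq_nonneg _)]
    simp only [Pi.add_apply]
    nlinarith [sq_nonneg (η t ω + η s ω)]
  have hsum : Integrable (fun ω => |ξ t ω - ξ s ω| ^ 2 + |η t ω - η s ω| ^ 2) (P : Measure Ω) := by
    have := hint2f.add hint2g
    simp only [sq_abs]
    exact this
  have hmono : ∫ ω, (ξ t ω - ξ s ω) ^ 2 ∂(P : Measure Ω)
      ≤ ∫ ω, (|ξ t ω - ξ s ω| ^ 2 + |η t ω - η s ω| ^ 2) ∂(P : Measure Ω) := by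
    refine integral_mono hint2f hsum fun ω => ?_
    rw [sq_abs]
    exact le_add_of_nonneg_right (by positivity)
  exact SXV.int_abs_le_sqrt hmf.aestronglyMeasurable hint2f
    (hmono.trans (hB1 s hs t ht P hP))

/-- Modulus of continuity of `t ↦ ∫ ξ_t dP`. -/
lemma SXV.int_time_mod {𝒮 : Set (ProbabilityMeasure Ω)} {T C : ℝ} {ξ : ℝ → Ω → ℝ}
    (hξ : ∀ t ∈ Icc (0:ℝ) T, MemL1 𝒮 (ξ t))
    (hmod : ∀ s ∈ Icc (0:ℝ) T, ∀ t ∈ Icc (0:ℝ) T, ∀ P ∈ 𝒮,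
      ∫ ω, |ξ t ω - ξ s ω| ∂(P : Measure Ω) ≤ Real.sqrt (C * |t - s|)) :
    ∀ s ∈ Icc (0:ℝ) T, ∀ t ∈ Icc (0:ℝ) T, ∀ P ∈ 𝒮,
      |(∫ ω, ξ t ω ∂(P : Measure Ω)) - ∫ ω, ξ s ω ∂(P : Measure Ω)| ≤ Real.sqrt (C * |t - s|) := by
  intro s hs t ht P hP
  have hsub : (∫ ω, ξ t ω ∂(P : Measure Ω)) - ∫ ω, ξ s ω ∂(P : Measure Ω)
      = ∫ ω, (ξ t ω - ξ s ω) ∂(P : Measure Ω) :=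
    (integral_sub ((hξ t ht).2.1 P hP) ((hξ s hs).2.1 P hP)).symm
  rw [hsub]
  have habs : |∫ ω, (ξ t ω - ξ s ω) ∂(P : Measure Ω)|
      ≤ ∫ ω, |ξ t ω - ξ s ω| ∂(P : Measure Ω) := by
    simpa [Real.norm_eq_abs] using
      norm_integral_le_integral_norm (μ := (P : Measure Ω)) (fun ω => ξ t ω - ξ s ω)
  exact habs.trans (hmod s hs t ht P hP)

/-- Continuity of `t ↦ sublinE 𝒮 (ξ t)` on `[0,T]`. -/
lemma SXV.contOn_sublin {𝒮 : Set (ProbabilityMeasure Ω)} (h𝒮ne : 𝒮.Nonempty)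
    (h𝒮c : IsCompact 𝒮) {T C : ℝ} {ξ : ℝ → Ω → ℝ}
    (hξ : ∀ t ∈ Icc (0:ℝ) T, MemL1 𝒮 (ξ t))
    (hmod : ∀ s ∈ Icc (0:ℝ) T, ∀ t ∈ Icc (0:ℝ) T, ∀ P ∈ 𝒮,
      ∫ ω, |ξ t ω - ξ s ω| ∂(P : Measure Ω) ≤ Real.sqrt (C * |t - s|)) :
    ContinuousOn (fun t => sublinE 𝒮 (ξ t)) (Icc (0:ℝ) T) := by
  have hmod' := SXV.int_time_mod hξ hmod
  refine SXV.contOn_of_sqrt_mod (C := C) (T := T) ?_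
  intro s hs t ht
  have key : ∀ u ∈ Icc (0:ℝ) T, ∀ v ∈ Icc (0:ℝ) T,
      sublinE 𝒮 (ξ u) ≤ sublinE 𝒮 (ξ v) + Real.sqrt (C * |u - v|) := by
    intro u hu v hv
    obtain ⟨_, _, _, hlev⟩ := SXV.exists_max h𝒮c h𝒮ne (SXV.contOn_int (hξ v hv))
    haveI : Nonempty 𝒮 := h𝒮ne.to_subtype
    refine ciSup_le fun ⟨P, hP⟩ => ?_
    have h1 : ∫ ω, ξ u ω ∂(P : Measure Ω)
        ≤ (∫ ω, ξ v ω ∂(P : Measure Ω)) + Real.sqrt (C * |u - v|) := by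
      have := hmod' v hv u hu P hP
      have h2 := abs_sub_le_iff.mp this
      linarith [h2.1]
    exact h1.trans (add_le_add_left (hlev P hP) _)
  have h1 := key t ht s hs
  have h2 := key s hs t ht
  rw [abs_sub_comm s t] at h2
  rw [abs_sub_le_iff]
  constructor <;> linarith

end Aux2

section Aux3
set_option linter.unusedSectionVars false
variable {X : Type*} [MeasurableSpace X] [MetricSpace X]
  [TopologicalSpace.SeparableSpace X] [BorelSpace X]

example : FirstCountableTopology (ProbabilityMeasure X) := inferInstance

/-- Transport of integral convergence along converging times and measures. -/
lemma SXV.tendsto_int {𝒮 : Set (ProbabilityMeasure X)} {T C : ℝ} {ξ : ℝ → X → ℝ}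
    (hξ : ∀ t ∈ Icc (0:ℝ) T, MemL1 𝒮 (ξ t))
    (hmod : ∀ s ∈ Icc (0:ℝ) T, ∀ t ∈ Icc (0:ℝ) T, ∀ P ∈ 𝒮,
      ∫ ω, |ξ t ω - ξ s ω| ∂(P : Measure X) ≤ Real.sqrt (C * |t - s|))
    {t : ℕ → ℝ} {t₀ : ℝ} (htmem : ∀ n, t n ∈ Icc (0:ℝ) T) (ht₀ : t₀ ∈ Icc (0:ℝ) T)
    (ht : Tendsto t atTop (𝓝 t₀))
    {P : ℕ → ProbabilityMeasure X} {P₀ : ProbabilityMeasure X}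
    (hPmem : ∀ n, P n ∈ 𝒮) (hP₀ : P₀ ∈ 𝒮) (hP : Tendsto P atTop (𝓝 P₀)) :
    Tendsto (fun n => ∫ ω, ξ (t n) ω ∂(P n : Measure X)) atTop
      (𝓝 (∫ ω, ξ t₀ ω ∂(P₀ : Measure X))) := by
  have h1 : Tendsto (fun n => ∫ ω, ξ t₀ ω ∂(P n : Measure X)) atTop
      (𝓝 (∫ ω, ξ t₀ ω ∂(P₀ : Measure X))) :=
    (SXV.contOn_int (hξ t₀ ht₀) P₀ hP₀).tendsto.comp
      (tendsto_nhdsWithin_iff.mpr ⟨hP, Eventually.of_forall hPmem⟩)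
  have hb : ∀ n, ‖(∫ ω, ξ (t n) ω ∂(P n : Measure X)) - ∫ ω, ξ t₀ ω ∂(P n : Measure X)‖
      ≤ Real.sqrt (C * |t n - t₀|) := by
    intro n
    rw [Real.norm_eq_abs]
    exact SXV.int_time_mod hξ hmod t₀ ht₀ (t n) (htmem n) (P n) (hPmem n)
  have hlim : Tendsto (fun n => Real.sqrt (C * |t n - t₀|)) atTop (𝓝 0) := by
    have hc : Continuous fun u : ℝ => Real.sqrt (C * |u - t₀|) :=
      Real.continuous_sqrt.comp (continuous_const.mul ((continuous_id.sub continuous_const).abs))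
    have := (hc.tendsto t₀).comp ht
    simpa [Function.comp_def] using this
  have h2 : Tendsto (fun n => (∫ ω, ξ (t n) ω ∂(P n : Measure X))
      - ∫ ω, ξ t₀ ω ∂(P n : Measure X)) atTop (𝓝 0) := squeeze_zero_norm hb hlim
  have := h2.add h1
  simpa using this

lemma SXV.maximizers_struct {𝒮 : Set (ProbabilityMeasure X)} (h𝒮ne : 𝒮.Nonempty)
    (h𝒮c : IsCompact 𝒮) {ξ : X → ℝ} (hξ : MemL1 𝒮 ξ) :
    (maximizers 𝒮 ξ).Nonempty ∧ IsCompact (maximizers 𝒮 ξ) ∧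
      ∀ P ∈ 𝒮, ∫ ω, ξ ω ∂(P : Measure X) ≤ sublinE 𝒮 ξ := by
  obtain ⟨P₀, hP₀, heq, hlev⟩ := SXV.exists_max h𝒮c h𝒮ne (SXV.contOn_int hξ)
  exact ⟨⟨P₀, hP₀, heq⟩, SXV.isCompact_level h𝒮c (SXV.contOn_int hξ) _, hlev⟩

lemma SXV.condMaximizers_struct {𝒮 : Set (ProbabilityMeasure X)} (h𝒮ne : 𝒮.Nonempty)
    (h𝒮c : IsCompact 𝒮) {ξ η : X → ℝ} (hξ : MemL1 𝒮 ξ) (hη : MemL1 𝒮 η) :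
    (condMaximizers 𝒮 ξ η).Nonempty ∧ IsCompact (condMaximizers 𝒮 ξ η) ∧
      ∀ P ∈ maximizers 𝒮 ξ, ∫ ω, η ω ∂(P : Measure X) ≤ sublinECond 𝒮 ξ η := by
  obtain ⟨hMne, hMc, _⟩ := SXV.maximizers_struct h𝒮ne h𝒮c hξ
  have hsub : maximizers 𝒮 ξ ⊆ 𝒮 := fun P hP => hP.1
  have hcont : ContinuousOn (fun P : ProbabilityMeasure X => ∫ ω, η ω ∂(P : Measure X))
      (maximizers 𝒮 ξ) := (SXV.contOn_int hη).mono hsub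
  obtain ⟨P₀, hP₀, heq, hlev⟩ := SXV.exists_max hMc hMne hcont
  exact ⟨⟨P₀, hP₀, heq⟩, SXV.isCompact_level hMc hcont _, hlev⟩

/-- Upper semicontinuity of `t ↦ Ê_{ξ_t}[η_t]` on `[0,T]`. -/
lemma SXV.usc_sublinECond {𝒮 : Set (ProbabilityMeasure X)} (h𝒮ne : 𝒮.Nonempty)
    (h𝒮c : IsCompact 𝒮) {T C : ℝ} {ξ η : ℝ → X → ℝ}
    (hξ : ∀ t ∈ Icc (0:ℝ) T, MemL1 𝒮 (ξ t)) (hη : ∀ t ∈ Icc (0:ℝ) T, MemL1 𝒮 (η t))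
    (hmodξ : ∀ s ∈ Icc (0:ℝ) T, ∀ t ∈ Icc (0:ℝ) T, ∀ P ∈ 𝒮,
      ∫ ω, |ξ t ω - ξ s ω| ∂(P : Measure X) ≤ Real.sqrt (C * |t - s|))
    (hmodη : ∀ s ∈ Icc (0:ℝ) T, ∀ t ∈ Icc (0:ℝ) T, ∀ P ∈ 𝒮,
      ∫ ω, |η t ω - η s ω| ∂(P : Measure X) ≤ Real.sqrt (C * |t - s|)) :
    UpperSemicontinuous (fun t : Icc (0:ℝ) T => sublinECond 𝒮 (ξ ↑t) (η ↑t)) := by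
  intro t₀ y hy
  by_contra hcon
  rw [Filter.not_eventually] at hcon
  obtain ⟨u, hu_t, hu_p⟩ := Filter.exists_seq_forall_of_frequently hcon
  have hstr : ∀ n, (condMaximizers 𝒮 (ξ ↑(u n)) (η ↑(u n))).Nonempty :=
    fun n => (SXV.condMaximizers_struct h𝒮ne h𝒮c (hξ _ (u n).2) (hη _ (u n).2)).1
  choose P hPmem using hstr
  have hP𝒮 : ∀ n, P n ∈ 𝒮 := fun n => (hPmem n).1.1
  obtain ⟨P₀, hP₀𝒮, φ, hφmono, hφlim⟩ := h𝒮c.tendsto_subseq hP𝒮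
  have htlim : Tendsto (fun n => ((u (φ n) : Icc (0:ℝ) T) : ℝ)) atTop (𝓝 (t₀ : ℝ)) :=
    (continuous_subtype_val.tendsto t₀).comp (hu_t.comp hφmono.tendsto_atTop)
  have htmem : ∀ n, ((u (φ n) : Icc (0:ℝ) T) : ℝ) ∈ Icc (0:ℝ) T := fun n => (u (φ n)).2
  -- ξ-integrals converge
  have hvalξ : Tendsto (fun n => ∫ ω, ξ ↑(u (φ n)) ω ∂(P (φ n) : Measure X)) atTop
      (𝓝 (∫ ω, ξ ↑t₀ ω ∂(P₀ : Measure X))) :=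
    SXV.tendsto_int hξ hmodξ htmem t₀.2 htlim (fun n => hP𝒮 (φ n)) hP₀𝒮 hφlim
  have hceq : ∀ n, ∫ ω, ξ ↑(u (φ n)) ω ∂(P (φ n) : Measure X) = sublinE 𝒮 (ξ ↑(u (φ n))) :=
    fun n => (hPmem (φ n)).1.2
  have hclim : Tendsto (fun n => sublinE 𝒮 (ξ ↑(u (φ n)))) atTop (𝓝 (sublinE 𝒮 (ξ ↑t₀))) := by
    have hc := SXV.contOn_sublin h𝒮ne h𝒮c hξ hmodξ
    exact (hc ↑t₀ t₀.2).tendsto.comp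
      (tendsto_nhdsWithin_iff.mpr ⟨htlim, Eventually.of_forall htmem⟩)
  have hP₀max : P₀ ∈ maximizers 𝒮 (ξ ↑t₀) := by
    refine ⟨hP₀𝒮, ?_⟩
    have h1 : Tendsto (fun n => ∫ ω, ξ ↑(u (φ n)) ω ∂(P (φ n) : Measure X)) atTop
        (𝓝 (sublinE 𝒮 (ξ ↑t₀))) := by
      refine hclim.congr fun n => (hceq n).symm
    exact tendsto_nhds_unique hvalξ h1
  -- η-integrals converge
  have hvalη : Tendsto (fun n => ∫ ω, η ↑(u (φ n)) ω ∂(P (φ n) : Measure X)) atTop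
      (𝓝 (∫ ω, η ↑t₀ ω ∂(P₀ : Measure X))) :=
    SXV.tendsto_int hη hmodη htmem t₀.2 htlim (fun n => hP𝒮 (φ n)) hP₀𝒮 hφlim
  have hge : y ≤ ∫ ω, η ↑t₀ ω ∂(P₀ : Measure X) := by
    refine ge_of_tendsto hvalη (Eventually.of_forall fun n => ?_)
    have h1 := hu_p (φ n)
    rw [not_lt] at h1
    rw [(hPmem (φ n)).2]
    exact h1
  have hle : ∫ ω, η ↑t₀ ω ∂(P₀ : Measure X) ≤ sublinECond 𝒮 (ξ ↑t₀) (η ↑t₀) :=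
    (SXV.condMaximizers_struct h𝒮ne h𝒮c (hξ _ t₀.2) (hη _ t₀.2)).2.2 P₀ hP₀max
  exact absurd hy (not_lt.mpr (hge.trans hle))

end Aux3

section Aux4

/-- An inf over a compact set equals the inf over a dense sequence in it. -/
lemma SXV.ciInf_dense {Y : Type*} [TopologicalSpace Y] {K : Set Y} (hK : IsCompact K)
    (hne : K.Nonempty) {u : ℕ → Y} (humem : ∀ n, u n ∈ K)
    (hdense : ∀ x ∈ K, ∀ V ∈ 𝓝 x, ∃ n, u n ∈ V)
    {f : Y → ℝ} (hf : ContinuousOn f K) :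
    (⨅ x : K, f x) = ⨅ n, f (u n) := by
  obtain ⟨x₀, hx₀K, hx₀⟩ := hK.exists_isMinOn hne hf
  have hbdd : BddBelow (range fun x : K => f x) := by
    refine ⟨f x₀, ?_⟩; rintro y ⟨⟨x, hx⟩, rfl⟩; exact hx₀ hx
  have hbdd2 : BddBelow (range fun n => f (u n)) := by
    refine ⟨f x₀, ?_⟩; rintro y ⟨n, rfl⟩; exact hx₀ (humem n)
  haveI : Nonempty K := hne.to_subtype
  have hKinf : (⨅ x : K, f x) = f x₀ :=
    le_antisymm (ciInf_le hbdd ⟨x₀, hx₀K⟩) (le_ciInf fun ⟨x, hx⟩ => hx₀ hx)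
  apply le_antisymm
  · exact le_ciInf fun n => ciInf_le hbdd ⟨u n, humem n⟩
  · rw [hKinf]
    refine le_of_forall_pos_le_add fun ε hε => ?_
    have hcw : ContinuousWithinAt f K x₀ := hf x₀ hx₀K
    have hmem : {y | f y < f x₀ + ε} ∈ 𝓝[K] x₀ := hcw (Iio_mem_nhds (by linarith))
    obtain ⟨V, hVopen, hx₀V, hVsub⟩ := mem_nhdsWithin.mp hmem
    obtain ⟨n, hn⟩ := hdense x₀ hx₀K V (hVopen.mem_nhds hx₀V)
    have hlt : f (u n) < f x₀ + ε := hVsub ⟨hn, humem n⟩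
    exact (ciInf_le hbdd2 n).trans hlt.le

/-- Penalization: sup over `k` of penalized infima over `K` equals the inf over `Γ`. -/
lemma SXV.penalize {Y : Type*} [TopologicalSpace Y] [FirstCountableTopology Y]
    {K Γ : Set Y} (hK : IsCompact K) (hΓK : Γ ⊆ K) (hΓne : Γ.Nonempty)
    {φ dq : Y → ℝ} (hφc : ContinuousOn φ K) (hdc : ContinuousOn dq K)
    (hφ0 : ∀ x ∈ K, 0 ≤ φ x) (hd0 : ∀ x ∈ K, 0 ≤ dq x)
    (hΓ : ∀ x ∈ K, (φ x = 0 ↔ x ∈ Γ)) :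
    (⨆ k : ℕ, ⨅ x : K, (dq x + (k : ℝ) * φ x)) = ⨅ x : Γ, dq x := by
  have hKne : K.Nonempty := hΓne.mono hΓK
  haveI : Nonempty K := hKne.to_subtype
  haveI : Nonempty Γ := hΓne.to_subtype
  set F := (⨅ x : Γ, dq x) with hF
  have hbddK : ∀ k : ℕ, BddBelow (range fun x : K => dq x + (k : ℝ) * φ x) := by
    intro k
    refine ⟨0, ?_⟩
    rintro y ⟨⟨x, hx⟩, rfl⟩
    exact add_nonneg (hd0 x hx) (mul_nonneg (Nat.cast_nonneg k) (hφ0 x hx))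
  have hbddΓ : BddBelow (range fun x : Γ => dq x) := by
    refine ⟨0, ?_⟩; rintro y ⟨⟨x, hx⟩, rfl⟩; exact hd0 x (hΓK hx)
  have hHleF : ∀ k : ℕ, (⨅ x : K, (dq x + (k : ℝ) * φ x)) ≤ F := by
    intro k
    refine le_ciInf fun ⟨x, hx⟩ => ?_
    have h0 : φ x = 0 := (hΓ x (hΓK hx)).2 hx
    have heq : dq x + (k : ℝ) * φ x = dq x := by rw [h0]; ring
    exact le_of_le_of_eq (ciInf_le (hbddK k) ⟨x, hΓK hx⟩) heq
  have hbddsup : BddAbove (range fun k : ℕ => ⨅ x : K, (dq x + (k : ℝ) * φ x)) := by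
    refine ⟨F, ?_⟩; rintro y ⟨k, rfl⟩; exact hHleF k
  apply le_antisymm (ciSup_le hHleF)
  by_contra hlt
  push_neg at hlt
  set S := (⨆ k : ℕ, ⨅ x : K, (dq x + (k : ℝ) * φ x)) with hS
  have hcont : ∀ k : ℕ, ContinuousOn (fun x => dq x + (k : ℝ) * φ x) K :=
    fun k => hdc.add (continuousOn_const.mul hφc)
  choose xk hxkK hxkmin using fun k : ℕ => hK.exists_isMinOn hKne (hcont k)
  have hfk_le : ∀ k : ℕ, dq (xk k) + (k : ℝ) * φ (xk k) ≤ S := by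
    intro k
    have h1 : dq (xk k) + (k : ℝ) * φ (xk k) ≤ ⨅ x : K, (dq x + (k : ℝ) * φ x) :=
      le_ciInf fun ⟨y, hy⟩ => hxkmin k hy
    exact h1.trans (le_ciSup hbddsup k)
  obtain ⟨x₀, hx₀K, ψ, hψmono, hψlim⟩ := hK.tendsto_subseq hxkK
  have hS0 : 0 ≤ S := by
    have h1 : (0:ℝ) ≤ ⨅ x : K, (dq x + ((0:ℕ) : ℝ) * φ x) := by
      refine le_ciInf fun ⟨x, hx⟩ => ?_
      exact add_nonneg (hd0 x hx) (mul_nonneg (by norm_num) (hφ0 x hx))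
    exact h1.trans (le_ciSup hbddsup 0)
  have hφx₀ : φ x₀ = 0 := by
    have hφlim : Tendsto (fun n => φ (xk (ψ n))) atTop (𝓝 (φ x₀)) :=
      (hφc x₀ hx₀K).tendsto.comp
        (tendsto_nhdsWithin_iff.mpr ⟨hψlim, Eventually.of_forall fun n => hxkK (ψ n)⟩)
    have hub : ∀ n : ℕ, 1 ≤ n → φ (xk (ψ n)) ≤ S / (ψ n : ℝ) := by
      intro n hn
      have hψn : 1 ≤ ψ n := hn.trans (hψmono.le_apply)
      have hpos : (0:ℝ) < (ψ n : ℝ) := by exact_mod_cast hψn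
      rw [le_div_iff₀ hpos]
      have := hfk_le (ψ n)
      have hd := hd0 _ (hxkK (ψ n))
      linarith [this, hd]
    have hzero : Tendsto (fun n : ℕ => S / (ψ n : ℝ)) atTop (𝓝 0) := by
      apply Tendsto.comp (tendsto_const_div_atTop_nhds_zero_nat S)
      exact hψmono.tendsto_atTop
    have hto0 : Tendsto (fun n => φ (xk (ψ n))) atTop (𝓝 0) := by
      have hnn : ∀ n, 0 ≤ φ (xk (ψ n)) := fun n => hφ0 _ (hxkK (ψ n))
      refine squeeze_zero' (Eventually.of_forall hnn) ?_ hzero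
      filter_upwards [eventually_ge_atTop 1] with n hn using hub n hn
    exact tendsto_nhds_unique hφlim hto0
  have hx₀Γ : x₀ ∈ Γ := (hΓ x₀ hx₀K).1 hφx₀
  have h1 : F ≤ dq x₀ := ciInf_le hbddΓ ⟨x₀, hx₀Γ⟩
  have h2 : dq x₀ ≤ S := by
    have hdlim : Tendsto (fun n => dq (xk (ψ n))) atTop (𝓝 (dq x₀)) :=
      (hdc x₀ hx₀K).tendsto.comp
        (tendsto_nhdsWithin_iff.mpr ⟨hψlim, Eventually.of_forall fun n => hxkK (ψ n)⟩)
    refine le_of_tendsto hdlim (Eventually.of_forall fun n => ?_)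
    have := hfk_le (ψ n)
    have hφn : 0 ≤ ((ψ n : ℕ) : ℝ) * φ (xk (ψ n)) :=
      mul_nonneg (Nat.cast_nonneg _) (hφ0 _ (hxkK (ψ n)))
    linarith
  exact absurd (h1.trans h2) (not_le.mpr hlt)

end Aux4

/-- under (B.1), the function `F(t, Q) := inf {d_LP(Q, R) : R ∈ 𝒫_{ξ_t|η_t}}`
is Borel measurable on `[0,T] × 𝒮`, where the space of probability measures carries the
topology (and Borel σ-field) of the Lévy–Prokhorov metric. -/
theorem stmt_15 {Ω : Type*} [MeasurableSpace Ω] [MetricSpace Ω]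
    [TopologicalSpace.SeparableSpace Ω] [CompleteSpace Ω] [BorelSpace Ω]
    (𝒮 : Set (ProbabilityMeasure Ω)) (h𝒮ne : 𝒮.Nonempty) (h𝒮c : IsCompact 𝒮)
    (T : ℝ) (hT : 0 < T) (ξ η : ℝ → Ω → ℝ)
    (hξ : ∀ t ∈ Icc (0:ℝ) T, MemL1 𝒮 (ξ t)) (hη : ∀ t ∈ Icc (0:ℝ) T, MemL1 𝒮 (η t))
    (hξ2 : ∀ t ∈ Icc (0:ℝ) T, ∀ P ∈ 𝒮, Integrable (fun ω => (ξ t ω) ^ 2) (P : Measure Ω))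
    (hη2 : ∀ t ∈ Icc (0:ℝ) T, ∀ P ∈ 𝒮, Integrable (fun ω => (η t ω) ^ 2) (P : Measure Ω))
    (C : ℝ) (hC : 0 ≤ C)
    (hB1 : ∀ s ∈ Icc (0:ℝ) T, ∀ t ∈ Icc (0:ℝ) T, ∀ P ∈ 𝒮,
      ∫ ω, (|ξ t ω - ξ s ω| ^ 2 + |η t ω - η s ω| ^ 2) ∂(P : Measure Ω) ≤ C * |t - s|) :
    letI : MeasurableSpace (ProbabilityMeasure Ω) :=
      MeasurableSpace.comap LevyProkhorov.ofMeasure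
        (borel (LevyProkhorov (ProbabilityMeasure Ω)))
    Measurable
      (fun p : Icc (0:ℝ) T × 𝒮 =>
        ⨅ R : condMaximizers 𝒮 (ξ (p.1 : ℝ)) (η (p.1 : ℝ)),
          levyProkhorovDist ((p.2 : ProbabilityMeasure Ω) : Measure Ω)
            ((R : ProbabilityMeasure Ω) : Measure Ω)) := by
  letI m : MeasurableSpace (ProbabilityMeasure Ω) :=
    MeasurableSpace.comap LevyProkhorov.ofMeasure (borel (LevyProkhorov (ProbabilityMeasure Ω)))
  -- the Borel σ-algebra of the LP metric agrees with that of the weak topology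
  have htop : (inferInstance : TopologicalSpace (ProbabilityMeasure Ω))
      = TopologicalSpace.induced LevyProkhorov.ofMeasure
          (inferInstance : TopologicalSpace (LevyProkhorov (ProbabilityMeasure Ω))) :=
    (LevyProkhorov.probabilityMeasureHomeomorph (Ω := Ω)).isInducing.eq_induced
  haveI hBS : @BorelSpace (ProbabilityMeasure Ω) _ m :=
    by
      have hb : m = @borel (ProbabilityMeasure Ω) (TopologicalSpace.induced LevyProkhorov.ofMeasure
          (inferInstance : TopologicalSpace (LevyProkhorov (ProbabilityMeasure Ω)))) := borel_comap.symm
      exact ⟨hb.trans (congrArg (@borel (ProbabilityMeasure Ω)) htop.symm)⟩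
  -- moduli of continuity
  have hmodξ := SXV.l1_mod hξ hη hξ2 hη2 hB1
  have hmodη : ∀ s ∈ Icc (0:ℝ) T, ∀ t ∈ Icc (0:ℝ) T, ∀ P ∈ 𝒮,
      ∫ ω, |η t ω - η s ω| ∂(P : Measure Ω) ≤ Real.sqrt (C * |t - s|) := by
    refine SXV.l1_mod hη hξ hη2 hξ2 ?_
    intro s hs t ht P hP
    have := hB1 s hs t ht P hP
    simpa [add_comm] using this
  -- a dense sequence in 𝒮
  obtain ⟨u, humem, hudense⟩ : ∃ u : ℕ → ProbabilityMeasure Ω, (∀ n, u n ∈ 𝒮) ∧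
      (∀ x ∈ 𝒮, ∀ V ∈ 𝓝 x, ∃ n, u n ∈ V) := by
    letI : PseudoMetricSpace (ProbabilityMeasure Ω) :=
      TopologicalSpace.pseudoMetrizableSpacePseudoMetric (ProbabilityMeasure Ω)
    haveI : CompactSpace (↥𝒮) := isCompact_iff_compactSpace.mp h𝒮c
    haveI : Nonempty (↥𝒮) := h𝒮ne.to_subtype
    haveI : TopologicalSpace.SeparableSpace (↥𝒮) := inferInstance
    set u' := TopologicalSpace.denseSeq (↥𝒮) with hu'
    refine ⟨fun n => ↑(u' n), fun n => (u' n).2, ?_⟩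
    intro x hx V hV
    have hx' : (⟨x, hx⟩ : ↥𝒮) ∈ closure (range u') :=
      (TopologicalSpace.denseRange_denseSeq (↥𝒮)) ⟨x, hx⟩
    have hVpre : (Subtype.val ⁻¹' V : Set ↥𝒮) ∈ 𝓝 (⟨x, hx⟩ : ↥𝒮) :=
      continuous_subtype_val.continuousAt.preimage_mem_nhds hV
    obtain ⟨y, hyV, hyrange⟩ := mem_closure_iff_nhds.mp hx' _ hVpre
    obtain ⟨n, rfl⟩ := hyrange
    exact ⟨n, hyV⟩
  -- notation
  set c : ℝ → ℝ := fun t => sublinE 𝒮 (ξ t) with hc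
  set g : ℝ → ℝ := fun t => sublinECond 𝒮 (ξ t) (η t) with hg
  set φf : ℝ → ProbabilityMeasure Ω → ℝ := fun t R =>
    (c t - ∫ ω, ξ t ω ∂(R : Measure Ω)) + |g t - ∫ ω, η t ω ∂(R : Measure Ω)| with hφf
  -- basic facts about φf
  have hφ0 : ∀ t ∈ Icc (0:ℝ) T, ∀ R ∈ 𝒮, 0 ≤ φf t R := by
    intro t ht R hR
    have h1 := (SXV.maximizers_struct h𝒮ne h𝒮c (hξ t ht)).2.2 R hR
    have h2 : (0:ℝ) ≤ |g t - ∫ ω, η t ω ∂(R : Measure Ω)| := abs_nonneg _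
    simp only [hφf]
    have : (0:ℝ) ≤ c t - ∫ ω, ξ t ω ∂(R : Measure Ω) := by simp only [hc]; linarith
    linarith
  have hφiff : ∀ t ∈ Icc (0:ℝ) T, ∀ R ∈ 𝒮,
      (φf t R = 0 ↔ R ∈ condMaximizers 𝒮 (ξ t) (η t)) := by
    intro t ht R hR
    have h1 := (SXV.maximizers_struct h𝒮ne h𝒮c (hξ t ht)).2.2 R hR
    constructor
    · intro h0
      have ha : (0:ℝ) ≤ c t - ∫ ω, ξ t ω ∂(R : Measure Ω) := by simp only [hc]; linarith
      have hb : (0:ℝ) ≤ |g t - ∫ ω, η t ω ∂(R : Measure Ω)| := abs_nonneg _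
      simp only [hφf] at h0
      have hc0 : c t - ∫ ω, ξ t ω ∂(R : Measure Ω) = 0 := by linarith
      have hd0 : |g t - ∫ ω, η t ω ∂(R : Measure Ω)| = 0 := by linarith
      rw [abs_eq_zero] at hd0
      refine ⟨⟨hR, by simp only [hc] at hc0; linarith⟩, ?_⟩
      simp only [hg] at hd0; linarith
    · rintro ⟨⟨hR𝒮, hmax⟩, hcond⟩
      simp only [hφf, hc, hg]
      rw [hmax, hcond]
      simp
  have hφcont : ∀ t ∈ Icc (0:ℝ) T, ContinuousOn (φf t) 𝒮 := by
    intro t ht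
    exact ((continuousOn_const.sub (SXV.contOn_int (hξ t ht))).add
      ((continuousOn_const.sub (SXV.contOn_int (hη t ht))).abs))
  -- the distance function
  have hdcont : ∀ Q : ProbabilityMeasure Ω, Continuous (fun R : ProbabilityMeasure Ω =>
      levyProkhorovDist (Q : Measure Ω) (R : Measure Ω)) := by
    intro Q
    have h1 : Continuous (LevyProkhorov.ofMeasure (α := ProbabilityMeasure Ω)) :=
      LevyProkhorov.continuous_ofMeasure_probabilityMeasure
    have h2 : Continuous (fun R : LevyProkhorov (ProbabilityMeasure Ω) =>
        @dist (LevyProkhorov (ProbabilityMeasure Ω)) _ (LevyProkhorov.ofMeasure Q) R) :=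
      continuous_const.dist continuous_id
    exact h2.comp h1
  have hdnonneg : ∀ Q R : ProbabilityMeasure Ω,
      0 ≤ levyProkhorovDist (Q : Measure Ω) (R : Measure Ω) := fun Q R =>
    (dist_nonneg : (0:ℝ) ≤ @dist (LevyProkhorov (ProbabilityMeasure Ω)) _
      (LevyProkhorov.ofMeasure Q) (LevyProkhorov.ofMeasure R))
  -- key pointwise identity
  have hkey : ∀ p : Icc (0:ℝ) T × 𝒮,
      (⨅ R : condMaximizers 𝒮 (ξ (p.1 : ℝ)) (η (p.1 : ℝ)),
        levyProkhorovDist ((p.2 : ProbabilityMeasure Ω) : Measure Ω)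
          ((R : ProbabilityMeasure Ω) : Measure Ω))
      = ⨆ k : ℕ, ⨅ x : 𝒮, (levyProkhorovDist ((p.2 : ProbabilityMeasure Ω) : Measure Ω)
          ((x : ProbabilityMeasure Ω) : Measure Ω) + (k : ℝ) * φf (p.1 : ℝ) x) := by
    rintro ⟨t, Q⟩
    have ht : (t : ℝ) ∈ Icc (0:ℝ) T := t.2
    have hΓ := SXV.condMaximizers_struct h𝒮ne h𝒮c (hξ _ ht) (hη _ ht)
    have hΓsub : condMaximizers 𝒮 (ξ (t : ℝ)) (η (t : ℝ)) ⊆ 𝒮 := fun R hR => hR.1.1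
    exact (SXV.penalize h𝒮c hΓsub hΓ.1 (hφcont _ ht)
      ((hdcont Q).continuousOn) (hφ0 _ ht) (fun R _ => hdnonneg Q R)
      (hφiff _ ht)).symm
  -- replace infimum over 𝒮 by infimum over the dense sequence
  have hkey2 : ∀ p : Icc (0:ℝ) T × 𝒮, ∀ k : ℕ,
      (⨅ x : 𝒮, (levyProkhorovDist ((p.2 : ProbabilityMeasure Ω) : Measure Ω)
          ((x : ProbabilityMeasure Ω) : Measure Ω) + (k : ℝ) * φf (p.1 : ℝ) x))
      = ⨅ n : ℕ, (levyProkhorovDist ((p.2 : ProbabilityMeasure Ω) : Measure Ω)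
          ((u n : ProbabilityMeasure Ω) : Measure Ω) + (k : ℝ) * φf (p.1 : ℝ) (u n)) := by
    rintro ⟨t, Q⟩ k
    have ht : (t : ℝ) ∈ Icc (0:ℝ) T := t.2
    refine SXV.ciInf_dense (f := fun R : ProbabilityMeasure Ω =>
      levyProkhorovDist ((Q : ProbabilityMeasure Ω) : Measure Ω) (R : Measure Ω)
        + (k : ℝ) * φf (t : ℝ) R) h𝒮c h𝒮ne humem hudense ?_
    exact ((hdcont Q).continuousOn).add (continuousOn_const.mul (hφcont _ ht))
  have hfun : (fun p : Icc (0:ℝ) T × 𝒮 =>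
      ⨅ R : condMaximizers 𝒮 (ξ (p.1 : ℝ)) (η (p.1 : ℝ)),
        levyProkhorovDist ((p.2 : ProbabilityMeasure Ω) : Measure Ω)
          ((R : ProbabilityMeasure Ω) : Measure Ω))
      = fun p : Icc (0:ℝ) T × 𝒮 => ⨆ k : ℕ, ⨅ n : ℕ,
        (levyProkhorovDist ((p.2 : ProbabilityMeasure Ω) : Measure Ω)
          ((u n : ProbabilityMeasure Ω) : Measure Ω) + (k : ℝ) * φf (p.1 : ℝ) (u n)) := by
    funext p
    rw [hkey p]
    exact iSup_congr fun k => hkey2 p k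
  rw [hfun]
  -- measurability
  have hmeasg : Measurable (fun t : Icc (0:ℝ) T => g (t : ℝ)) :=
    (SXV.usc_sublinECond h𝒮ne h𝒮c hξ hη hmodξ hmodη).measurable
  have hmeasc : Measurable (fun t : Icc (0:ℝ) T => c (t : ℝ)) := by
    have hcont := SXV.contOn_sublin h𝒮ne h𝒮c hξ hmodξ
    exact (continuousOn_iff_continuous_restrict.mp hcont).measurable
  have hmeasintξ : ∀ n : ℕ, Measurable (fun t : Icc (0:ℝ) T =>
      ∫ ω, ξ (t : ℝ) ω ∂(u n : Measure Ω)) := by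
    intro n
    have hmod' := SXV.int_time_mod hξ hmodξ
    have hcont : ContinuousOn (fun t : ℝ => ∫ ω, ξ t ω ∂(u n : Measure Ω)) (Icc (0:ℝ) T) :=
      SXV.contOn_of_sqrt_mod (C := C) (T := T)
        (fun s hs t ht => hmod' s hs t ht (u n) (humem n))
    exact (continuousOn_iff_continuous_restrict.mp hcont).measurable
  have hmeasintη : ∀ n : ℕ, Measurable (fun t : Icc (0:ℝ) T =>
      ∫ ω, η (t : ℝ) ω ∂(u n : Measure Ω)) := by
    intro n
    have hmod' := SXV.int_time_mod hη hmodη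
    have hcont : ContinuousOn (fun t : ℝ => ∫ ω, η t ω ∂(u n : Measure Ω)) (Icc (0:ℝ) T) :=
      SXV.contOn_of_sqrt_mod (C := C) (T := T)
        (fun s hs t ht => hmod' s hs t ht (u n) (humem n))
    exact (continuousOn_iff_continuous_restrict.mp hcont).measurable
  have hmeasφ : ∀ n : ℕ, Measurable (fun t : Icc (0:ℝ) T => φf (t : ℝ) (u n)) := by
    intro n
    exact ((hmeasc.sub (hmeasintξ n)).add ((hmeasg.sub (hmeasintη n)).abs))
  have hmeasd : ∀ n : ℕ, Measurable (fun Q : 𝒮 =>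
      levyProkhorovDist ((Q : ProbabilityMeasure Ω) : Measure Ω)
        ((u n : ProbabilityMeasure Ω) : Measure Ω)) := by
    intro n
    have hcont2 : Continuous (fun R : ProbabilityMeasure Ω =>
        levyProkhorovDist (R : Measure Ω) ((u n : ProbabilityMeasure Ω) : Measure Ω)) := by
      have h1 : Continuous (LevyProkhorov.ofMeasure (α := ProbabilityMeasure Ω)) :=
        LevyProkhorov.continuous_ofMeasure_probabilityMeasure
      have h2 : Continuous (fun R : LevyProkhorov (ProbabilityMeasure Ω) =>
          @dist (LevyProkhorov (ProbabilityMeasure Ω)) _ R (LevyProkhorov.ofMeasure (u n))) :=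
        continuous_id.dist continuous_const
      exact h2.comp h1
    exact (hcont2.measurable).comp measurable_subtype_coe
  refine Measurable.iSup fun k => Measurable.iInf fun n => ?_
  exact ((hmeasd n).comp measurable_snd).add
    (measurable_const.mul ((hmeasφ n).comp measurable_fst))
end
end
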